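/- arXiv:math/0009064 — 9 statements merged into one kernel-verified Lean document; each statement's English description precedes it below -/
import Mathlib

section
/- Let κ be a regular uncountable cardinal and λ a cardinal. Suppose that for every limit ordinal i < κ we are given a function f_i : i → λ, and η : κ → λ is such that for every limit i < κ the set {ε < i : f_i(ε) ≠ η(ε)} is bounded in i. For ε < κ let B_ε = {i < κ : i is a limit ordinal, ε < i, and f_i(ε) = η(ε)}. Then the set A = {ε < κ : B_ε is not stationary in κ} is bounded in κ. -/
/-- `C` is a closed unbounded subset of the ordinal interval below `o`. -/
def ClubIn (C : Set Ordinal) (o : Ordinal) : Prop :=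
  (∀ a < o, ∃ b ∈ C, a ≤ b ∧ b < o) ∧
  (∀ a < o, Order.IsSuccLimit a → (∀ b < a, ∃ c ∈ C, b < c ∧ c < a) → a ∈ C)

/-- `S` is stationary below `o`: it meets every club below `o`. -/
def StationaryIn (S : Set Ordinal) (o : Ordinal) : Prop :=
  ∀ C : Set Ordinal, ClubIn C o → (S ∩ C).Nonempty

universe u

open Ordinal Cardinal in
/-- Given fewer-than-cofinality-many clubs... in fact κ-indexed clubs, there is a
limit ordinal `s < κ.ord` belonging to `C j` for every `j < s` (diagonal intersection). -/
lemma exists_limit_mem_diag (κ : Cardinal.{u}) (hreg : κ.IsRegular) (hκ : Cardinal.aleph0 < κ)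
    (C : Ordinal → Set Ordinal) (hC : ∀ j, ClubIn (C j) κ.ord) :
    ∃ s < κ.ord, Order.IsSuccLimit s ∧ ∀ j < s, s ∈ C j := by
  have hcof : κ.ord.cof = κ := hreg.cof_eq
  have hord : Order.IsSuccLimit κ.ord := Cardinal.isSuccLimit_ord hκ.le
  -- a choice function picking an element of `C j` at or above `x`
  have hpick : ∀ j x, ∃ b, x < κ.ord → b ∈ C j ∧ x ≤ b ∧ b < κ.ord := by
    intro j x
    by_cases hx : x < κ.ord
    · obtain ⟨b, hb, h1, h2⟩ := (hC j).1 x hx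
      exact ⟨b, fun _ => ⟨hb, h1, h2⟩⟩
    · exact ⟨0, fun h => absurd h hx⟩
  choose pick hpick' using hpick
  -- the recursive ω-sequence
  set s : ℕ → Ordinal := fun n =>
    Nat.rec 0 (fun _ t => max (Ordinal.bsup.{u,u} t (fun j _ => pick j t)) (t + 1)) n with hs
  have hsucc : ∀ n, s (n + 1) = max (Ordinal.bsup.{u,u} (s n) (fun j _ => pick j (s n))) (s n + 1) :=
    fun n => rfl
  have hlt : ∀ n, s n < κ.ord := by
    intro n
    induction n with
    | zero =>
      show (0 : Ordinal) < κ.ord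
      exact Cardinal.lt_ord.2 (by simpa using aleph0_pos.trans hκ)
    | succ n ih =>
      rw [hsucc]
      refine max_lt ?_ (hord.succ_lt ih)
      refine Ordinal.bsup_lt_ord ?_ (fun j hj => (hpick' j (s n) ih).2.2)
      rw [hcof]; exact Cardinal.lt_ord.1 ih
  have hmono : StrictMono s := by
    refine strictMono_nat_of_lt_succ (fun n => ?_)
    rw [hsucc]
    exact lt_of_lt_of_le (Order.lt_succ _) (le_max_right _ _)
  set S : Ordinal := ⨆ n, s n with hS
  have hSlt : S < κ.ord := by
    refine Ordinal.iSup_lt_ord_lift ?_ hlt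
    rw [Cardinal.mk_nat, Cardinal.lift_aleph0, hcof]; exact hκ
  have hle : ∀ n, s n ≤ S := fun n => Ordinal.le_iSup s n
  have hSlim : Order.IsSuccLimit S := by
    rw [Ordinal.isSuccLimit_iff, Order.isSuccPrelimit_iff_succ_lt]
    constructor
    · have h1 : (0 : Ordinal) < s 1 := by
        have := hmono (show 0 < 1 by norm_num)
        exact lt_of_le_of_lt zero_le this
      exact ne_of_gt (h1.trans_le (hle 1))
    · intro a ha
      obtain ⟨n, hn⟩ := Ordinal.lt_iSup_iff.1 ha
      have : Order.succ a ≤ s n := Order.succ_le_of_lt hn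
      exact lt_of_le_of_lt this ((hmono (Nat.lt_succ_self n)).trans_le (hle (n + 1)))
  refine ⟨S, hSlt, hSlim, ?_⟩
  intro j hj
  obtain ⟨n, hn⟩ := Ordinal.lt_iSup_iff.1 hj
  refine (hC j).2 S hSlt hSlim ?_
  intro b hb
  obtain ⟨m, hm⟩ := Ordinal.lt_iSup_iff.1 hb
  set N := max n m with hN
  have hjN : j < s N := hn.trans_le (hmono.monotone (le_max_left n m))
  have hbN : b < s N := hm.trans_le (hmono.monotone (le_max_right n m))
  have hNlt := hlt N
  refine ⟨pick j (s N), (hpick' j (s N) hNlt).1, ?_, ?_⟩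
  · exact hbN.trans_le (hpick' j (s N) hNlt).2.1
  · have h1 : pick j (s N) ≤ Ordinal.bsup.{u,u} (s N) (fun j _ => pick j (s N)) :=
      Ordinal.le_bsup _ j hjN
    have h2 : Ordinal.bsup.{u,u} (s N) (fun j _ => pick j (s N)) ≤ s (N + 1) := by
      rw [hsucc]; exact le_max_left _ _
    exact lt_of_le_of_lt (h1.trans h2) ((hmono (Nat.lt_succ_self (N + 1))).trans_le (hle (N + 2)))

theorem stmt3 (κ : Cardinal) (hreg : κ.IsRegular) (hκ : Cardinal.aleph0 < κ)
    (α : Type) (f : Ordinal → (Ordinal → α)) (η : Ordinal → α)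
    (hagree : ∀ i < κ.ord, Order.IsSuccLimit i →
      ∃ j < i, ∀ ε, j ≤ ε → ε < i → f i ε = η ε)
    (B : Ordinal → Set Ordinal)
    (hB : ∀ ε, B ε = {i : Ordinal | i < κ.ord ∧ Order.IsSuccLimit i ∧ ε < i ∧ f i ε = η ε}) :
    ∃ j < κ.ord, ∀ ε < κ.ord, ¬ StationaryIn (B ε) κ.ord → ε < j := by
  classical
  have hord : Order.IsSuccLimit κ.ord := Cardinal.isSuccLimit_ord hκ.le
  -- choice of agreement bounds
  have hag : ∀ i, ∃ j, i < κ.ord → Order.IsSuccLimit i →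
      j < i ∧ ∀ ε, j ≤ ε → ε < i → f i ε = η ε := by
    intro i
    by_cases h : i < κ.ord ∧ Order.IsSuccLimit i
    · obtain ⟨j, hj, hj'⟩ := hagree i h.1 h.2
      exact ⟨j, fun _ _ => ⟨hj, hj'⟩⟩
    · refine ⟨0, fun h1 h2 => absurd ⟨h1, h2⟩ h⟩
  choose g hg using hag
  set T : Ordinal → Set Ordinal := fun j => {i | i < κ.ord ∧ Order.IsSuccLimit i ∧ g i ≤ j} with hT
  -- Step 1: some T j is stationary
  have step1 : ∃ j < κ.ord, StationaryIn (T j) κ.ord := by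
    by_contra hcon
    push_neg at hcon
    have hD : ∀ j, ∃ D, ClubIn D κ.ord ∧ (j < κ.ord → T j ∩ D = ∅) := by
      intro j
      by_cases hj : j < κ.ord
      · have := hcon j hj
        rw [StationaryIn] at this
        push_neg at this
        obtain ⟨D, hD1, hD2⟩ := this
        exact ⟨D, hD1, fun _ => hD2⟩
      · exact ⟨Set.univ, ⟨fun a ha => ⟨a, trivial, le_refl a, ha⟩,
          fun a _ _ _ => trivial⟩, fun h => absurd h hj⟩
    choose D hD1 hD2 using hD
    obtain ⟨s, hs, hslim, hsmem⟩ := exists_limit_mem_diag κ hreg hκ D hD1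
    have hgs := hg s hs hslim
    have h1 : s ∈ T (g s) := ⟨hs, hslim, le_refl _⟩
    have h2 : s ∈ D (g s) := hsmem _ hgs.1
    have : s ∈ T (g s) ∩ D (g s) := ⟨h1, h2⟩
    rw [hD2 _ (hgs.1.trans hs)] at this
    exact this
  obtain ⟨j, hjlt, hjstat⟩ := step1
  refine ⟨j, hjlt, ?_⟩
  intro ε hε hnstat
  by_contra hjε
  push_neg at hjε
  -- then B ε is stationary, contradiction
  apply hnstat
  intro C hC
  set C' : Set Ordinal := C ∩ {x | ε < x} with hC'
  have hC'club : ClubIn C' κ.ord := by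
    constructor
    · intro a ha
      have hm : max a (ε + 1) < κ.ord := max_lt ha (hord.succ_lt hε)
      obtain ⟨b, hb, h1, h2⟩ := hC.1 _ hm
      exact ⟨b, ⟨hb, lt_of_lt_of_le (Order.lt_succ ε) ((le_max_right _ _).trans h1)⟩,
        (le_max_left _ _).trans h1, h2⟩
    · intro a ha halim hub
      have haC : a ∈ C := hC.2 a ha halim (fun b hb => by
        obtain ⟨c, ⟨hc1, _⟩, hc2, hc3⟩ := hub b hb
        exact ⟨c, hc1, hc2, hc3⟩)
      obtain ⟨c, ⟨_, hcε⟩, _, hc3⟩ := hub 0 halim.pos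
      exact ⟨haC, hcε.trans hc3⟩
  obtain ⟨i, ⟨hiκ, hilim, hgi⟩, hiC, hiε⟩ := hjstat C' hC'club
  refine ⟨i, ?_, hiC⟩
  rw [hB]
  exact ⟨hiκ, hilim, hiε, (hg i hiκ hilim).2 ε (hgi.trans hjε) hiε⟩
end

section
/- Let κ be a regular uncountable cardinal, λ a cardinal, and for each limit ordinal i < κ let F_i be a set of functions from i to λ which is a system of representatives modulo the bounded ideal on i (i.e., every g : i → λ agrees with some member of F_i off a bounded subset of i). For η : κ → λ and limit i < κ, let α_i(η) ∈ F_i be a representative agreeing with η↾i off a bounded set, and for ε < κ let B_ε(η) = {i < κ : i limit, ε < i, α_i(η)(ε) = η(ε)}, and A(η) = {ε < κ : B_ε(η) is not stationary}. Suppose η₁, η₂ : κ → λ satisfy: (i) {ε < κ : η₁(ε) ≠ η₂(ε)} is bounded in κ; (ii) α_i(η₁) = α_i(η₂) for all sufficiently large limit i < κ; (iii) for every ε < κ, B_ε(η₁) and B_ε(η₂) agree modulo the club filter on κ; and (iv) η₁(ε) = η₂(ε) for every ε ∈ A(η₁) ∪ A(η₂). Then η₁ = η₂. -/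
/-- A club intersected with a tail is a club. -/
lemma clubIn_inter_tail (C : Set Ordinal) (o j : Ordinal) (hj : j < o)
    (hC : ClubIn C o) : ClubIn (C ∩ {x | j ≤ x}) o := by
  constructor
  · intro a ha
    obtain ⟨b, hbC, hab, hbo⟩ := hC.1 (max a j) (max_lt ha hj)
    exact ⟨b, ⟨hbC, le_trans (le_max_right a j) hab⟩, le_trans (le_max_left a j) hab, hbo⟩
  · intro a ha halim hcl
    have haC : a ∈ C := by
      refine hC.2 a ha halim ?_
      intro b hb
      obtain ⟨c, ⟨hcC, _⟩, hbc, hca⟩ := hcl b hb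
      exact ⟨c, hcC, hbc, hca⟩
    obtain ⟨c, ⟨_, hjc⟩, _, hca⟩ := hcl 0 halim.pos
    exact ⟨haC, le_of_lt (lt_of_le_of_lt hjc hca)⟩

theorem stmt4 (κ : Cardinal) (hreg : κ.IsRegular) (hκ : Cardinal.aleph0 < κ)
    (α : Type)
    -- `rep i η` is the chosen representative `α_i(η)` of `η↾i` modulo the bounded ideal on `i`
    (rep : Ordinal → (Ordinal → α) → (Ordinal → α))
    (hrep : ∀ i < κ.ord, Order.IsSuccLimit i → ∀ η : Ordinal → α,
      ∃ j < i, ∀ ε, j ≤ ε → ε < i → rep i η ε = η ε)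
    (B : Ordinal → (Ordinal → α) → Set Ordinal)
    (hB : ∀ ε η, B ε η = {i : Ordinal | i < κ.ord ∧ Order.IsSuccLimit i ∧ ε < i ∧ rep i η ε = η ε})
    (A : (Ordinal → α) → Set Ordinal)
    (hA : ∀ η, A η = {ε : Ordinal | ε < κ.ord ∧ ¬ StationaryIn (B ε η) κ.ord})
    (η₁ η₂ : Ordinal → α)
    -- (i) the disagreement set is bounded in κ
    (h1 : ∃ j < κ.ord, ∀ ε, j ≤ ε → ε < κ.ord → η₁ ε = η₂ ε)
    -- (ii) the representatives eventually coincide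
    (h2 : ∃ j < κ.ord, ∀ i, j ≤ i → i < κ.ord → Order.IsSuccLimit i → rep i η₁ = rep i η₂)
    -- (iii) `B ε η₁` and `B ε η₂` agree modulo the club filter
    (h3 : ∀ ε < κ.ord, ¬ StationaryIn (symmDiff (B ε η₁) (B ε η₂)) κ.ord)
    -- (iv) agreement on `A η₁ ∪ A η₂`
    (h4 : ∀ ε ∈ A η₁ ∪ A η₂, η₁ ε = η₂ ε) :
    ∀ ε < κ.ord, η₁ ε = η₂ ε := by
  intro ε hε
  by_cases hmem : ε ∈ A η₁ ∪ A η₂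
  · exact h4 ε hmem
  · rw [Set.mem_union, hA, hA] at hmem
    push_neg at hmem
    have hS1 : StationaryIn (B ε η₁) κ.ord := by
      by_contra h
      exact hmem.1 ⟨hε, h⟩
    obtain ⟨j2, hj2, hrep2⟩ := h2
    have hNS := h3 ε hε
    unfold StationaryIn at hNS
    push_neg at hNS
    obtain ⟨C, hCclub, hCempty⟩ := hNS
    obtain ⟨i, hiB1, hiC, hij⟩ := hS1 (C ∩ {x | j2 ≤ x})
      (clubIn_inter_tail C κ.ord j2 hj2 hCclub)
    have hiB2 : i ∈ B ε η₂ := by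
      by_contra hcon
      exact absurd hCempty (Set.nonempty_iff_ne_empty.mp
        ⟨i, Set.mem_symmDiff.mpr (Or.inl ⟨hiB1, hcon⟩), hiC⟩)
    rw [hB] at hiB1 hiB2
    obtain ⟨hiκ, hilim, hεi, heq1⟩ := hiB1
    obtain ⟨_, _, _, heq2⟩ := hiB2
    have := hrep2 i hij hiκ hilim
    rw [← heq1, ← heq2, this]
end

section
/- Assume λ > κ = cf(λ) > ℵ₀ and 2^κ + λ^{<κ} = λ. Then there exists an equivalence relation E on ^κλ (the set of functions from κ to λ) such that: (i) whenever η₁, η₂ ∈ ^κλ agree off a bounded subset of κ, η₁ E η₂ holds if and only if η₁ = η₂; and (ii) E has exactly λ equivalence classes. -/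
open Cardinal Set

theorem stmt5 (κ lam : Cardinal)
    (hcf : κ = lam.ord.cof) (hkl : κ < lam) (hκ : Cardinal.aleph0 < κ)
    (harith : 2 ^ κ + lam ^< κ = lam) :
    ∃ E : Setoid (κ.ord.ToType → lam.ord.ToType),
      (∀ η₁ η₂ : κ.ord.ToType → lam.ord.ToType,
        (∃ j : κ.ord.ToType, ∀ i, η₁ i ≠ η₂ i → i ≤ j) →
        (E.r η₁ η₂ ↔ η₁ = η₂)) ∧
      Cardinal.mk (Quotient E) = lam := by
  have hκ0 : κ ≠ 0 := (Cardinal.aleph0_pos.trans hκ).ne'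
  have hlam0 : lam ≠ 0 := (hκ.trans hkl).ne_bot
  have hK : Nonempty κ.ord.ToType := Ordinal.toType_nonempty_iff_ne_zero.2 (by simp [hκ0])
  have hL : Nonempty lam.ord.ToType := Ordinal.toType_nonempty_iff_ne_zero.2 (by simp [hlam0])
  set K := κ.ord.ToType with hKdef
  set L := lam.ord.ToType with hLdef
  have hplt : lam ^< κ ≤ lam := le_trans (self_le_add_left _ _) harith.le
  have hkle : κ ≤ lam := hkl.le
  -- the "bounded difference" relation
  let r : (K → L) → (K → L) → Prop := fun η₁ η₂ => ∃ j : K, ∀ i, η₁ i ≠ η₂ i → i ≤ j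
  have requiv : Equivalence r := by
    constructor
    · intro η; exact ⟨Classical.arbitrary K, fun i h => absurd rfl h⟩
    · rintro η₁ η₂ ⟨j, hj⟩; exact ⟨j, fun i h => hj i (Ne.symm h)⟩
    · rintro η₁ η₂ η₃ ⟨j₁, h₁⟩ ⟨j₂, h₂⟩
      refine ⟨max j₁ j₂, fun i h => ?_⟩
      by_cases h12 : η₁ i = η₂ i
      · exact le_trans (h₂ i (h12 ▸ h)) (le_max_right _ _)
      · exact le_trans (h₁ i h12) (le_max_left _ _)
  let S : Setoid (K → L) := ⟨r, requiv⟩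
  -- each bounded-difference class has cardinality lam
  have hclass : ∀ q : Quotient S, #{η : K → L // Quotient.mk S η = q} = lam := by
    intro q
    set η₀ : K → L := q.out with hη₀
    have hmem : ∀ η : K → L, Quotient.mk S η = q → r η₀ η := by
      intro η h
      have : Quotient.mk S η₀ = Quotient.mk S η := by rw [h, Quotient.out_eq]
      exact @Quotient.exact _ S _ _ this
    apply le_antisymm
    · -- upper bound
      have hsub : ({η | Quotient.mk S η = q} : Set (K → L)) ⊆
          ⋃ j : K, {η | ∀ i, η₀ i ≠ η i → i ≤ j} := by
        intro η h
        obtain ⟨j, hj⟩ := hmem η h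
        exact mem_iUnion.2 ⟨j, hj⟩
      refine le_trans (mk_le_mk_of_subset hsub) (le_trans (mk_iUnion_le _) ?_)
      have hA : ∀ j : K, #{η : K → L | ∀ i, η₀ i ≠ η i → i ≤ j} ≤ lam := by
        intro j
        have hinj : #{η : K → L | ∀ i, η₀ i ≠ η i → i ≤ j} ≤ #(Set.Iic j → L) := by
          refine mk_le_of_injective (f := fun x (i : Set.Iic j) => x.val i.val) ?_
          intro x y hxy
          ext i
          by_cases hij : i ≤ j
          · exact congrFun hxy ⟨i, hij⟩
          · have hx : x.val i = η₀ i := by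
              by_contra h; exact hij (x.prop i (Ne.symm h))
            have hy : y.val i = η₀ i := by
              by_contra h; exact hij (y.prop i (Ne.symm h))
            rw [hx, hy]
        refine le_trans hinj ?_
        have hIic : #(Set.Iic j) < κ := by
          have h1 : #(Set.Iic j) ≤ #(Set.Iio j) + 1 := by
            rw [← Set.Iio_insert]
            exact mk_insert_le
          have h2 : #(Set.Iio j) < κ := mk_Iio_ord_toType j
          exact lt_of_le_of_lt h1 (add_lt_of_lt hκ.le h2 (one_lt_aleph0.trans hκ))
        have : #(Set.Iic j → L) = lam ^ #(Set.Iic j) := by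
          rw [mk_arrow, mk_ord_toType, lift_id, lift_id]
        rw [this]
        exact le_trans (le_powerlt lam hIic) hplt
      refine le_trans (mul_le_mul' (le_of_eq (mk_ord_toType κ)) (ciSup_le' hA)) ?_
      rw [Cardinal.mul_eq_max hκ.le (hκ.trans hkl).le, max_eq_right hkle]
    · -- lower bound
      obtain ⟨i₀⟩ := hK
      have hg : ∀ a : L, Quotient.mk S (Function.update η₀ i₀ a) = q := by
        intro a
        have hr : r η₀ (Function.update η₀ i₀ a) := by
          refine ⟨i₀, fun i h => ?_⟩
          by_contra hne
          have : i ≠ i₀ := fun he => hne (he ▸ le_rfl)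
          exact h (by rw [Function.update_of_ne this])
        calc Quotient.mk S (Function.update η₀ i₀ a)
            = Quotient.mk S η₀ := (@Quotient.sound _ S _ _ hr).symm
          _ = q := Quotient.out_eq q
      have : lam = #L := (mk_ord_toType lam).symm
      rw [this]
      refine mk_le_of_injective (f := fun a => (⟨Function.update η₀ i₀ a, hg a⟩ :
        {η : K → L // Quotient.mk S η = q})) ?_
      intro a b hab
      exact Function.update_injective η₀ i₀ (congrArg Subtype.val hab)
  -- choose bijections of classes with L
  have he : ∀ q : Quotient S, Nonempty ({η : K → L // Quotient.mk S η = q} ≃ L) := by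
    intro q
    exact Cardinal.eq.mp (by rw [hclass q, mk_ord_toType])
  let e : ∀ q : Quotient S, {η : K → L // Quotient.mk S η = q} ≃ L :=
    fun q => (he q).some
  let f : (K → L) → L := fun η => e (Quotient.mk S η) ⟨η, rfl⟩
  have key : ∀ (q : Quotient S) (η : K → L) (h : Quotient.mk S η = q),
      f η = e q ⟨η, h⟩ := by
    intro q η h
    subst h
    rfl
  refine ⟨Setoid.ker f, ?_, ?_⟩
  · intro η₁ η₂ hb
    constructor
    · intro hE
      have hq : Quotient.mk S η₁ = Quotient.mk S η₂ := @Quotient.sound _ S _ _ hb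
      have h1 := key (Quotient.mk S η₂) η₁ hq
      have h2 := key (Quotient.mk S η₂) η₂ rfl
      have hfe : f η₁ = f η₂ := hE
      rw [h1, h2] at hfe
      have := (e (Quotient.mk S η₂)).injective hfe
      exact congrArg Subtype.val this
    · rintro rfl
      exact rfl
  · have hsurj : Function.Surjective f := by
      intro a
      obtain ⟨η₀⟩ : Nonempty (K → L) := ⟨fun _ => Classical.arbitrary L⟩
      set q := Quotient.mk S η₀ with hq
      set x := (e q).symm a with hx
      refine ⟨x.val, ?_⟩
      have := key q x.val x.prop
      rw [this]
      have : (⟨x.val, x.prop⟩ : {η : K → L // Quotient.mk S η = q}) = x := rfl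
      rw [this, hx, Equiv.apply_symm_apply]
    calc #(Quotient (Setoid.ker f)) = #L :=
          mk_congr (Setoid.quotientKerEquivOfSurjective f hsurj)
      _ = lam := mk_ord_toType lam
end

section
/- Assume λ > κ = cf(λ) > ℵ₀, 2^κ + λ^{<κ} = λ, λ ≤ θ ≤ λ^κ, and there exists a tree T ⊆ ^{<κ}λ (closed under initial segments) with at most λ nodes and exactly θ branches of length κ. Then there exists an equivalence relation E on ^κλ such that: (i) whenever η₁, η₂ ∈ ^κλ agree off a bounded subset of κ, η₁ E η₂ if and only if η₁ = η₂; and (ii) E has exactly θ equivalence classes. -/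
open Cardinal Set

universe u

namespace Stmt6Aux

variable {κ lam : Cardinal.{u}}

theorem class_small (hkl : κ < lam) (hκ : Cardinal.aleph0 < κ)
    (hlt : lam ^< κ ≤ lam) (η : κ.ord.ToType → lam.ord.ToType) :
    #{χ : κ.ord.ToType → lam.ord.ToType // ∃ j, ∀ i, χ i ≠ η i → i ≤ j} ≤ lam := by
  classical
  have hal : ℵ₀ ≤ lam := (hκ.trans hkl).le
  have hinj : Function.Injective
      (fun χ : {χ : κ.ord.ToType → lam.ord.ToType // ∃ j, ∀ i, χ i ≠ η i → i ≤ j} =>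
        (⟨Classical.choose χ.2, fun i => χ.1 i.1⟩ :
          Σ j : κ.ord.ToType, (Set.Iic j → lam.ord.ToType))) := by
    rintro ⟨χ₁, h₁⟩ ⟨χ₂, h₂⟩ h
    simp only [Sigma.mk.inj_iff] at h
    obtain ⟨hj, hf⟩ := h
    apply Subtype.ext
    have hspec₁ := Classical.choose_spec h₁
    have hspec₂ := Classical.choose_spec h₂
    set j₁ := Classical.choose h₁ with hj₁
    set j₂ := Classical.choose h₂ with hj₂
    clear_value j₁ j₂
    subst hj
    have hf' := eq_of_heq hf
    funext i
    show χ₁ i = χ₂ i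
    by_cases hi : i ≤ j₁
    · exact congr_fun hf' ⟨i, hi⟩
    · have e1 : χ₁ i = η i := by
        by_contra hne; exact hi (hspec₁ i hne)
      have e2 : χ₂ i = η i := by
        by_contra hne; exact hi (hspec₂ i hne)
      rw [e1, e2]
  calc #{χ : κ.ord.ToType → lam.ord.ToType // ∃ j, ∀ i, χ i ≠ η i → i ≤ j}
      ≤ #(Σ j : κ.ord.ToType, (Set.Iic j → lam.ord.ToType)) := mk_le_of_injective hinj
    _ = Cardinal.sum (fun j : κ.ord.ToType => #(Set.Iic j → lam.ord.ToType)) := mk_sigma _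
    _ ≤ Cardinal.sum (fun _ : κ.ord.ToType => lam) := by
        apply Cardinal.sum_le_sum
        intro j
        have h1 : #(Set.Iic j) < κ := by
          rw [← Set.Iio_insert]
          refine lt_of_le_of_lt Cardinal.mk_insert_le ?_
          exact Cardinal.add_lt_of_lt hκ.le (Cardinal.mk_Iio_ord_toType j)
            (lt_of_lt_of_le Cardinal.one_lt_aleph0 hκ.le)
        have : #(Set.Iic j → lam.ord.ToType) = lam ^ #(Set.Iic j) := by
          rw [← Cardinal.power_def, mk_ord_toType]
        rw [this]
        exact (Cardinal.le_powerlt lam h1).trans hlt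
    _ = #(κ.ord.ToType) * lam := Cardinal.sum_const' _ _
    _ = lam := by
        rw [mk_ord_toType, Cardinal.mul_eq_max hκ.le hal]
        exact max_eq_right hkl.le

end Stmt6Aux

namespace Stmt6Aux

theorem key {X Z : Type u} [Nonempty Z] (B : Setoid X)
    (g : Quotient B → X → Z)
    (hg : ∀ q χ₁ χ₂, B.r χ₁ (Quotient.out q) → B.r χ₂ (Quotient.out q) →
      g q χ₁ = g q χ₂ → χ₁ = χ₂)
    (τ : Quotient B → Z) (hτ : Function.Surjective τ) :
    ∃ E : Setoid X, (∀ η₁ η₂, B.r η₁ η₂ → (E.r η₁ η₂ ↔ η₁ = η₂)) ∧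
      Nonempty (Quotient E ≃ Z) := by
  classical
  have hmem : ∀ χ : X, B.r χ (Quotient.mk B χ).out := fun χ =>
    B.symm (Quotient.exact (Quotient.out_eq (Quotient.mk B χ)))
  have hrefl : ∀ q : Quotient B, B.r q.out q.out := fun q => B.refl _
  set c : X → Z := fun χ =>
    if χ = (Quotient.mk B χ).out then τ (Quotient.mk B χ) else
      (if g (Quotient.mk B χ) χ = τ (Quotient.mk B χ) then
        g (Quotient.mk B χ) ((Quotient.mk B χ).out) else g (Quotient.mk B χ) χ) with hc_def
  have hcs : Function.Surjective c := by
    intro z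
    obtain ⟨q, hq⟩ := hτ z
    refine ⟨q.out, ?_⟩
    rw [hc_def]
    simp only [Quotient.out_eq, if_pos rfl]
    exact hq
  have hinj : ∀ χ₁ χ₂, B.r χ₁ χ₂ → c χ₁ = c χ₂ → χ₁ = χ₂ := by
    intro χ₁ χ₂ hB hc
    have hq : Quotient.mk B χ₂ = Quotient.mk B χ₁ := (Quotient.sound hB).symm
    set q := Quotient.mk B χ₁ with hqdef
    have m₁ : B.r χ₁ q.out := hmem χ₁
    have m₂ : B.r χ₂ q.out := by rw [← hq]; exact hmem χ₂
    rw [hc_def] at hc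
    simp only [hq, ← hqdef] at hc
    by_cases h1 : χ₁ = q.out <;> by_cases h2 : χ₂ = q.out
    · rw [h1, h2]
    · rw [if_pos h1, if_neg h2] at hc
      by_cases hg2 : g q χ₂ = τ q
      · rw [if_pos hg2] at hc
        exact absurd (hg q _ _ m₂ (hrefl q) (hg2.trans hc)) h2
      · rw [if_neg hg2] at hc
        exact absurd hc.symm hg2
    · rw [if_neg h1, if_pos h2] at hc
      by_cases hg1 : g q χ₁ = τ q
      · rw [if_pos hg1] at hc
        exact absurd (hg q _ _ m₁ (hrefl q) (hg1.trans hc.symm)) h1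
      · rw [if_neg hg1] at hc
        exact absurd hc hg1
    · rw [if_neg h1, if_neg h2] at hc
      by_cases hg1 : g q χ₁ = τ q <;> by_cases hg2 : g q χ₂ = τ q
      · exact hg q _ _ m₁ m₂ (hg1.trans hg2.symm)
      · rw [if_pos hg1, if_neg hg2] at hc
        exact absurd (hg q _ _ (hrefl q) m₂ hc).symm h2
      · rw [if_neg hg1, if_pos hg2] at hc
        exact absurd (hg q _ _ m₁ (hrefl q) hc) h1
      · rw [if_neg hg1, if_neg hg2] at hc
        exact hg q _ _ m₁ m₂ hc
  refine ⟨Setoid.ker c, ?_, ⟨Setoid.quotientKerEquivOfSurjective c hcs⟩⟩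
  intro η₁ η₂ hB
  constructor
  · intro h
    exact hinj _ _ hB h
  · intro h
    rw [h]

end Stmt6Aux



theorem stmt6 (κ lam θ : Cardinal)
    (hcf : κ = lam.ord.cof) (hkl : κ < lam) (hκ : Cardinal.aleph0 < κ)
    (harith : 2 ^ κ + lam ^< κ = lam)
    (hθ1 : lam ≤ θ) (hθ2 : θ ≤ lam ^ κ)
    -- a tree `T ⊆ ^{<κ}λ`: nodes are sequences of length `β < κ` with values in `λ`
    (T : Set (Σ β : κ.ord.ToType, (Set.Iio β → lam.ord.ToType)))
    -- closed under initial segments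
    (hT_closed : ∀ p ∈ T, ∀ γ : κ.ord.ToType, ∀ h : γ ≤ p.1,
      (⟨γ, fun i => p.2 ⟨i.1, lt_of_lt_of_le i.2 h⟩⟩ :
        Σ β : κ.ord.ToType, (Set.Iio β → lam.ord.ToType)) ∈ T)
    -- at most λ nodes
    (hT_nodes : Cardinal.mk T ≤ lam)
    -- exactly θ branches of length κ
    (hT_branches : Cardinal.mk {b : κ.ord.ToType → lam.ord.ToType |
      ∀ β : κ.ord.ToType,
        (⟨β, fun i => b i.1⟩ : Σ β : κ.ord.ToType, (Set.Iio β → lam.ord.ToType)) ∈ T} = θ) :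
    ∃ E : Setoid (κ.ord.ToType → lam.ord.ToType),
      (∀ η₁ η₂ : κ.ord.ToType → lam.ord.ToType,
        (∃ j : κ.ord.ToType, ∀ i, η₁ i ≠ η₂ i → i ≤ j) →
        (E.r η₁ η₂ ↔ η₁ = η₂)) ∧
      Cardinal.mk (Quotient E) = θ := by
  classical
  have hal : ℵ₀ ≤ lam := (hκ.trans hkl).le
  have haθ : ℵ₀ ≤ θ := hal.trans hθ1
  have hlt : lam ^< κ ≤ lam := le_of_le_of_eq (le_add_self) harith
  haveI hne : Nonempty κ.ord.ToType := by
    rw [Ordinal.toType_nonempty_iff_ne_zero]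
    intro h0
    rw [Cardinal.ord_eq_zero] at h0
    exact (lt_irrefl _ (h0 ▸ (aleph0_pos.trans hκ))).elim
  haveI hneZ : Nonempty θ.ord.ToType := by
    rw [Ordinal.toType_nonempty_iff_ne_zero]
    intro h0
    rw [Cardinal.ord_eq_zero] at h0
    exact (lt_irrefl _ (h0 ▸ (aleph0_pos.trans_le haθ))).elim
  set X := κ.ord.ToType → lam.ord.ToType with hX
  set Z := θ.ord.ToType with hZdef
  have hZ : #Z = θ := mk_ord_toType θ
  -- the bounded-difference setoid
  set B : Setoid X := {
    r := fun η₁ η₂ => ∃ j, ∀ i, η₁ i ≠ η₂ i → i ≤ j,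
    iseqv := by
      refine ⟨fun η => ⟨Classical.arbitrary _, fun i h => absurd rfl h⟩, ?_, ?_⟩
      · rintro η₁ η₂ ⟨j, hj⟩
        exact ⟨j, fun i h => hj i (Ne.symm h)⟩
      · rintro a b d ⟨j₁, h₁⟩ ⟨j₂, h₂⟩
        refine ⟨j₁ ⊔ j₂, fun i h => ?_⟩
        by_cases hab : a i = b i
        · exact le_sup_of_le_right (h₂ i fun hbc => h (hab.trans hbc))
        · exact le_sup_of_le_left (h₁ i hab) } with hB
  -- each class is small
  have hclass : ∀ η : X, #{χ : X // B.r χ η} ≤ lam := fun η =>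
    Stmt6Aux.class_small hkl hκ hlt η
  -- the quotient is large
  have hQ : θ ≤ #(Quotient B) := by
    have hXcard : #X = lam ^ κ := by
      rw [hX, ← Cardinal.power_def, mk_ord_toType, mk_ord_toType]
    have hlam_lt : lam < lam ^ κ := by
      rw [hcf]; exact Cardinal.lt_power_cof hal
    have hXle : #X ≤ #(Quotient B) * lam := by
      have hfib : ∀ q : Quotient B, #((Quotient.mk B) ⁻¹' {q}) ≤ lam := by
        intro q
        have : ((Quotient.mk B) ⁻¹' {q} : Set X) ≃ {χ : X // B.r χ q.out} := by
          refine Equiv.subtypeEquivRight fun χ => ?_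
          simp only [Set.mem_preimage, Set.mem_singleton_iff]
          constructor
          · intro h
            have hout : Quotient.mk B q.out = Quotient.mk B χ := by
              rw [Quotient.out_eq, h]
            exact B.symm (Quotient.exact hout)
          · intro h
            rw [← Quotient.out_eq q]
            exact Quotient.sound h
        rw [Cardinal.mk_congr this]
        exact hclass _
      calc #X ≤ #(Σ q : Quotient B, ((Quotient.mk B) ⁻¹' {q} : Set X)) :=
            Cardinal.mk_le_of_injective (f := fun χ => ⟨Quotient.mk B χ, χ, rfl⟩)
              (by rintro χ₁ χ₂ h
                  have := congrArg (fun p : Σ q : Quotient B,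
                    ((Quotient.mk B) ⁻¹' {q} : Set X) => (p.2 : X)) h
                  simpa using this)
        _ = Cardinal.sum (fun q : Quotient B => #((Quotient.mk B) ⁻¹' {q} : Set X)) :=
            Cardinal.mk_sigma _
        _ ≤ Cardinal.sum (fun _ : Quotient B => lam) := Cardinal.sum_le_sum _ _ hfib
        _ = #(Quotient B) * lam := Cardinal.sum_const' _ _
    rcases le_total lam #(Quotient B) with h | h
    · calc θ ≤ lam ^ κ := hθ2
        _ = #X := hXcard.symm
        _ ≤ #(Quotient B) * lam := hXle
        _ = max #(Quotient B) lam := Cardinal.mul_eq_max (hal.trans h) hal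
        _ = #(Quotient B) := max_eq_left h
    · exfalso
      have : lam ^ κ ≤ lam := by
        calc lam ^ κ = #X := hXcard.symm
          _ ≤ #(Quotient B) * lam := hXle
          _ ≤ lam * lam := mul_le_mul_left h lam
          _ = lam := Cardinal.mul_eq_self hal
      exact absurd this hlam_lt.not_ge
  -- injections from classes into Z
  have hembs : ∀ q : Quotient B, Nonempty ({χ : X // B.r χ q.out} ↪ Z) := by
    intro q
    rw [← Cardinal.le_def]
    exact le_of_le_of_eq ((hclass _).trans hθ1) hZ.symm
  set g : Quotient B → X → Z := fun q χ =>
    if h : B.r χ q.out then (Classical.choice (hembs q)) ⟨χ, h⟩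
    else Classical.arbitrary Z with hgdef
  have hg : ∀ q χ₁ χ₂, B.r χ₁ (Quotient.out q) → B.r χ₂ (Quotient.out q) →
      g q χ₁ = g q χ₂ → χ₁ = χ₂ := by
    intro q χ₁ χ₂ m₁ m₂ h
    rw [hgdef] at h
    simp only [dif_pos m₁, dif_pos m₂] at h
    have := (Classical.choice (hembs q)).injective h
    exact congrArg Subtype.val this
  -- a surjection from the quotient onto Z
  obtain ⟨e⟩ : Nonempty (Z ↪ Quotient B) := by
    rw [← Cardinal.le_def]
    exact le_of_eq_of_le hZ hQ
  have hτ : Function.Surjective (Function.invFun e) :=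
    Function.invFun_surjective e.injective
  obtain ⟨E, hE1, ⟨hE2⟩⟩ := Stmt6Aux.key B g hg (Function.invFun e) hτ
  refine ⟨E, ?_, ?_⟩
  · intro η₁ η₂ hb
    exact hE1 η₁ η₂ hb
  · rw [Cardinal.mk_congr hE2, hZ]
end

section
/- Let κ be a measurable cardinal and D a normal ultrafilter on κ. Then for every cardinal ρ < κ, every A ∈ D, and every function f : [A]² → ρ on unordered pairs from A, there exists B ∈ D with B ⊆ A such that f is constant on [B]². -/
theorem stmt8 (κ : Cardinal) (hκ : Cardinal.aleph0 < κ)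
    (D : Ultrafilter κ.ord.ToType)
    -- D is nonprincipal
    (hnp : ∀ x : κ.ord.ToType, {x} ∉ D)
    -- D is κ-complete
    (hcomplete : ∀ s : Set (Set κ.ord.ToType), Cardinal.mk s < κ →
      (∀ A ∈ s, A ∈ D) → ⋂₀ s ∈ D)
    -- D is normal: closed under diagonal intersections
    (hnormal : ∀ f : κ.ord.ToType → Set κ.ord.ToType, (∀ i, f i ∈ D) →
      {j : κ.ord.ToType | ∀ i < j, j ∈ f i} ∈ D) :
    ∀ (R : Type) (_ : Cardinal.mk R < κ) (A : Set κ.ord.ToType), A ∈ D →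
      ∀ f : κ.ord.ToType → κ.ord.ToType → R,
        ∃ B ∈ D, B ⊆ A ∧ ∃ r : R, ∀ x ∈ B, ∀ y ∈ B, x < y → f x y = r := by
  intro R hR A hA f
  -- κ-completeness gives a partition property: every map into R is constant on a D-set
  have key : ∀ g : κ.ord.ToType → R, ∃ r : R, {x | g x = r} ∈ D := by
    intro g
    by_contra h
    push_neg at h
    have h' : ∀ r : R, {x | g x ≠ r} ∈ D := by
      intro r
      have := (Ultrafilter.compl_mem_iff_notMem (s := {x | g x = r})).2 (h r)
      simpa [Set.compl_setOf] using this
    set s : Set (Set κ.ord.ToType) := Set.range (fun r : R => {x | g x ≠ r}) with hs_def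
    have hs : Cardinal.mk s < κ := lt_of_le_of_lt Cardinal.mk_range_le hR
    have hmem : ⋂₀ s ∈ D := by
      refine hcomplete s hs ?_
      rintro B ⟨r, rfl⟩
      exact h' r
    have hempty : (⋂₀ s : Set κ.ord.ToType) = ∅ := by
      ext x
      simp only [Set.mem_sInter, Set.mem_empty_iff_false, iff_false, not_forall]
      exact ⟨{y | g y ≠ g x}, ⟨g x, rfl⟩, by simp⟩
    rw [hempty] at hmem
    exact Filter.empty_notMem (D : Filter κ.ord.ToType) hmem
  choose r hr using fun x => key (f x)
  have hC := hnormal (fun x => {y | f x y = r x}) hr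
  obtain ⟨r0, hr0⟩ := key r
  refine ⟨A ∩ ({j : κ.ord.ToType | ∀ i < j, j ∈ {y | f i y = r i}} ∩ {x | r x = r0}),
    Filter.inter_mem hA (Filter.inter_mem hC hr0), Set.inter_subset_left, r0, ?_⟩
  intro x hx y hy hxy
  have h1 : f x y = r x := hy.2.1 x hxy
  rw [h1]
  exact hx.2.2
end

section
/- Let M be an algebra (a set A with a countable family of finitary operations) and let cl(S) denote the subalgebra generated by S ⊆ A. Suppose there is no sequence ⟨a_j : j < ω⟩ of elements of A such that a_j ∉ cl({a_i : i > j}) for every j < ω. Then for every η : ω → A, the decreasing sequence of subalgebras n ↦ cl({η(ℓ) : ℓ ≥ n}) is eventually constant; equivalently, the set A(η) = {k < ω : there is k* < ω such that η(k) ∉ cl({η(ℓ) : ℓ ≥ k*})} is finite. -/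
/-- `S` is closed under all the operations of the algebra given by `op`. -/
def IsClosedUnderOps {A : Type*} (op : ℕ → Σ n : ℕ, ((Fin n → A) → A)) (S : Set A) : Prop :=
  ∀ k : ℕ, ∀ v : Fin (op k).1 → A, (∀ j, v j ∈ S) → (op k).2 v ∈ S

/-- The subalgebra generated by `S`. -/
def algCl {A : Type*} (op : ℕ → Σ n : ℕ, ((Fin n → A) → A)) (S : Set A) : Set A :=
  ⋂₀ {T : Set A | S ⊆ T ∧ IsClosedUnderOps op T}

theorem subset_algCl {A : Type*} (op : ℕ → Σ n : ℕ, ((Fin n → A) → A)) (S : Set A) :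
    S ⊆ algCl op S := fun x hx T hT => hT.1 hx

theorem algCl_closed {A : Type*} (op : ℕ → Σ n : ℕ, ((Fin n → A) → A)) (S : Set A) :
    IsClosedUnderOps op (algCl op S) := fun k v hv T hT => hT.2 k v (fun j => hv j T hT)

theorem algCl_min {A : Type*} (op : ℕ → Σ n : ℕ, ((Fin n → A) → A)) {S T : Set A}
    (h1 : S ⊆ T) (h2 : IsClosedUnderOps op T) : algCl op S ⊆ T :=
  fun x hx => hx T ⟨h1, h2⟩

theorem algCl_mono {A : Type*} (op : ℕ → Σ n : ℕ, ((Fin n → A) → A)) {S T : Set A}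
    (h : S ⊆ T) : algCl op S ⊆ algCl op T :=
  algCl_min op (h.trans (subset_algCl op T)) (algCl_closed op T)

theorem stmt9 (A : Type) (op : ℕ → Σ n : ℕ, ((Fin n → A) → A))
    (hfree : ¬ ∃ a : ℕ → A, ∀ j : ℕ, a j ∉ algCl op {x : A | ∃ i : ℕ, j < i ∧ x = a i}) :
    ∀ η : ℕ → A,
      (∃ N : ℕ, ∀ n : ℕ, N ≤ n →
        algCl op {x : A | ∃ ℓ : ℕ, n ≤ ℓ ∧ x = η ℓ} =
        algCl op {x : A | ∃ ℓ : ℕ, N ≤ ℓ ∧ x = η ℓ}) ∧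
      {k : ℕ | ∃ kstar : ℕ, η k ∉ algCl op {x : A | ∃ ℓ : ℕ, kstar ≤ ℓ ∧ x = η ℓ}}.Finite := by
  intro η
  classical
  set tl : ℕ → Set A := fun n => {x : A | ∃ ℓ : ℕ, n ≤ ℓ ∧ x = η ℓ} with htl
  set B : Set ℕ := {k : ℕ | ∃ kstar : ℕ, η k ∉ algCl op (tl kstar)} with hBdef
  have hBfin : B.Finite := by
    rw [← Set.not_infinite]
    intro hfin
    -- choose witnesses
    have hg : ∀ k ∈ B, ∃ m, η k ∉ algCl op (tl m) := fun k hk => hk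
    set g : ℕ → ℕ := fun k => if h : k ∈ B then (hg k h).choose else 0 with hgdef
    have hgspec : ∀ k ∈ B, η k ∉ algCl op (tl (g k)) := by
      intro k hk
      have : g k = (hg k hk).choose := dif_pos hk
      rw [this]
      exact (hg k hk).choose_spec
    have hpick : ∀ m : ℕ, ∃ k, k ∈ B ∧ m < k := by
      intro m
      obtain ⟨k, hk, hmk⟩ := hfin.exists_gt m
      exact ⟨k, hk, hmk⟩
    set pick : ℕ → ℕ := fun m => (hpick m).choose with hpickdef
    have hpickspec : ∀ m, pick m ∈ B ∧ m < pick m := fun m => (hpick m).choose_spec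
    set seq : ℕ → ℕ := fun j => Nat.rec (pick 0) (fun _ p => pick (max p (g p))) j with hseqdef
    have hseqsucc : ∀ j, seq (j + 1) = pick (max (seq j) (g (seq j))) := fun j => rfl
    have hseqB : ∀ j, seq j ∈ B := by
      intro j
      cases j with
      | zero => exact (hpickspec 0).1
      | succ n => rw [hseqsucc]; exact (hpickspec _).1
    have hlt : ∀ j, seq j < seq (j + 1) := by
      intro j
      rw [hseqsucc]
      exact lt_of_le_of_lt (le_max_left _ _) (hpickspec _).2
    have hglt : ∀ j, g (seq j) < seq (j + 1) := by
      intro j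
      rw [hseqsucc]
      exact lt_of_le_of_lt (le_max_right _ _) (hpickspec _).2
    have hmono : StrictMono seq := strictMono_nat_of_lt_succ hlt
    apply hfree
    refine ⟨fun j => η (seq j), ?_⟩
    intro j hjmem
    apply hgspec (seq j) (hseqB j)
    refine algCl_mono op ?_ hjmem
    rintro x ⟨i, hji, rfl⟩
    refine ⟨seq i, ?_, rfl⟩
    calc g (seq j) ≤ seq (j + 1) := (hglt j).le
      _ ≤ seq i := hmono.le_iff_le.mpr hji
  refine ⟨?_, hBfin⟩
  obtain ⟨N, hN⟩ := hBfin.bddAbove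
  refine ⟨N + 1, ?_⟩
  intro n hn
  have hnotB : ∀ k, N + 1 ≤ k → ∀ m, η k ∈ algCl op (tl m) := by
    intro k hk m
    by_contra h
    have : k ∈ B := ⟨m, h⟩
    have := hN this
    omega
  apply Set.Subset.antisymm
  · exact algCl_mono op (fun x ⟨ℓ, hℓ, hx⟩ => ⟨ℓ, by omega, hx⟩)
  · refine algCl_min op ?_ (algCl_closed op _)
    rintro x ⟨ℓ, hℓ, rfl⟩
    exact hnotB ℓ hℓ n
end

section
/- Assume λ is an uncountable cardinal with λ = λ^{<λ}, and assume there is a tree T with λ levels, each level of cardinality < λ, having 2^λ branches of length λ. Let 𝒟 be a family of at most λ dense open subsets of the partial order P = (^{<λ}2) × (^{<λ}2), ordered by coordinatewise end-extension. Then there is a set X ⊆ ^λ2 of cardinality 2^λ such that for any two distinct η₀, η₁ ∈ X and every D ∈ 𝒟 there is α < λ with (η₀↾α, η₁↾α) ∈ D. -/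
/-- End-extension of transfinite sequences. -/
def SeqLE {K : Type*} [Preorder K] {V : Type*}
    (p q : Σ β : K, (Set.Iio β → V)) : Prop :=
  ∃ h : p.1 ≤ q.1, ∀ i : Set.Iio p.1, p.2 i = q.2 ⟨i.1, lt_of_lt_of_le i.2 h⟩

/-- `D` is a dense open subset of the coordinatewise end-extension order on pairs. -/
def PairDenseOpen {K : Type*} [Preorder K] {V : Type*}
    (D : Set ((Σ β : K, (Set.Iio β → V)) × (Σ β : K, (Set.Iio β → V)))) : Prop :=
  (∀ p : (Σ β : K, (Set.Iio β → V)) × (Σ β : K, (Set.Iio β → V)),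
    ∃ q ∈ D, SeqLE p.1 q.1 ∧ SeqLE p.2 q.2) ∧
  (∀ p ∈ D, ∀ q : (Σ β : K, (Set.Iio β → V)) × (Σ β : K, (Set.Iio β → V)),
    SeqLE p.1 q.1 → SeqLE p.2 q.2 → q ∈ D)

universe u v

set_option linter.unusedSectionVars false

open Cardinal Set

section Aux

variable {K : Type u} {V : Type v}

theorem seqLE_refl [Preorder K] (p : Σ β : K, (Set.Iio β → V)) : SeqLE p p :=
  ⟨le_refl _, fun _ => rfl⟩

theorem seqLE_len [Preorder K] {p q : Σ β : K, (Set.Iio β → V)} (h : SeqLE p q) :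
    p.1 ≤ q.1 := h.choose

theorem seqLE_val [Preorder K] {p q : Σ β : K, (Set.Iio β → V)} (h : SeqLE p q)
    (x : K) (hx : x < p.1) (hx' : x < q.1) : p.2 ⟨x, hx⟩ = q.2 ⟨x, hx'⟩ := by
  obtain ⟨h1, h2⟩ := h
  exact h2 ⟨x, hx⟩

theorem seqLE_trans [Preorder K] {p q r : Σ β : K, (Set.Iio β → V)}
    (h1 : SeqLE p q) (h2 : SeqLE q r) : SeqLE p r := by
  obtain ⟨ha, hb⟩ := h1; obtain ⟨hc, hd⟩ := h2
  refine ⟨ha.trans hc, fun i => ?_⟩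
  exact (hb i).trans (hd ⟨i.1, lt_of_lt_of_le i.2 ha⟩)

variable [LinearOrder K] [WellFoundedLT K]

noncomputable def seqSupVal {ι : Type*} (f : ι → Σ β : K, (Set.Iio β → V)) (x : K)
    (hx : ∃ i, x < (f i).1) : V :=
  (f hx.choose).2 ⟨x, hx.choose_spec⟩

theorem seqSupVal_eq {ι : Type*} (f : ι → Σ β : K, (Set.Iio β → V))
    (hdir : ∀ i j, SeqLE (f i) (f j) ∨ SeqLE (f j) (f i))
    (x : K) (hx : ∃ i, x < (f i).1) (i : ι) (hi : x < (f i).1) :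
    seqSupVal f x hx = (f i).2 ⟨x, hi⟩ := by
  rcases hdir hx.choose i with h | h
  · exact seqLE_val h x hx.choose_spec hi
  · exact (seqLE_val h x hi hx.choose_spec).symm

noncomputable def seqSup {ι : Type*} (f : ι → Σ β : K, (Set.Iio β → V)) (b : K)
    (hb : ∀ i, (f i).1 ≤ b) : Σ β : K, (Set.Iio β → V) :=
  ⟨(IsWellFounded.wf (r := ((· < ·) : K → K → Prop))).min {c | ∀ i, (f i).1 ≤ c} ⟨b, hb⟩,
   fun x =>
     seqSupVal f x.1 (by
       by_contra hc
       push_neg at hc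
       exact absurd
         ((IsWellFounded.wf (r := ((· < ·) : K → K → Prop))).min_le
           (show (x : K) ∈ {c | ∀ i, (f i).1 ≤ c} from hc))
         (not_le.mpr x.2))⟩

theorem seqSup_le {ι : Type*} (f : ι → Σ β : K, (Set.Iio β → V)) (b : K)
    (hb : ∀ i, (f i).1 ≤ b)
    (hdir : ∀ i j, SeqLE (f i) (f j) ∨ SeqLE (f j) (f i)) (i : ι) :
    SeqLE (f i) (seqSup f b hb) := by
  have hmem := (IsWellFounded.wf (r := ((· < ·) : K → K → Prop))).min_mem
    {c | ∀ i, (f i).1 ≤ c} ⟨b, hb⟩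
  refine ⟨hmem i, fun x => ?_⟩
  exact (seqSupVal_eq f hdir x.1 _ i x.2).symm

def seqExt (p : Σ β : K, (Set.Iio β → V)) (c : K) (v : V) : Σ β : K, (Set.Iio β → V) :=
  ⟨max p.1 c, fun x => if h : x.1 < p.1 then p.2 ⟨x.1, h⟩ else v⟩

theorem seqLE_seqExt (p : Σ β : K, (Set.Iio β → V)) (c : K) (v : V) :
    SeqLE p (seqExt p c v) := by
  refine ⟨le_max_left _ _, fun i => ?_⟩
  show p.2 i = if h : (i : K) < p.1 then p.2 ⟨i.1, h⟩ else v
  rw [dif_pos (show (i : K) < p.1 from i.2)]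

theorem seqExt_len (p : Σ β : K, (Set.Iio β → V)) (c : K) (v : V) :
    c ≤ (seqExt p c v).1 := le_max_right _ _

theorem seqExt_val_ge (p : Σ β : K, (Set.Iio β → V)) (c : K) (v : V)
    (x : K) (hx : p.1 ≤ x) (h : x < (seqExt p c v).1) :
    (seqExt p c v).2 ⟨x, h⟩ = v := by
  show (if h : x < p.1 then p.2 ⟨x, h⟩ else v) = v
  exact dif_neg (not_lt.mpr hx)

end Aux
section PairGen

variable {K : Type u} [LinearOrder K] [WellFoundedLT K]

theorem exists_pairwise_generic (lam : Cardinal.{u})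
    (haleph : ℵ₀ ≤ lam)
    (hbdd : ∀ s : Set K, #s < lam → BddAbove s)
    (hsucc : ∀ x : K, ∃ y, x < y)
    {I : Type u} (hI : #I < lam)
    (D : Set ((Σ β : K, (Set.Iio β → Bool)) × (Σ β : K, (Set.Iio β → Bool))))
    (hD : PairDenseOpen D)
    (base : I → Σ β : K, (Set.Iio β → Bool)) :
    ∃ final : I → Σ β : K, (Set.Iio β → Bool),
      (∀ u, SeqLE (base u) (final u)) ∧
      ∀ u v, u ≠ v → ((final u, final v) ∈ D ∧
        ∃ (x : K) (h0 : x < (final u).1) (h1 : x < (final v).1),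
          (final u).2 ⟨x, h0⟩ ≠ (final v).2 ⟨x, h1⟩) := by
  classical
  have hbdd' : ∀ {ι : Type u} (g : ι → K), #ι < lam → ∃ b, ∀ i, g i ≤ b := by
    intro ι g hι
    obtain ⟨b, hb⟩ := hbdd (Set.range g) (Cardinal.mk_range_le.trans_lt hι)
    exact ⟨b, fun i => hb (Set.mem_range_self i)⟩
  haveI : IsWellOrder (I × I) WellOrderingRel := WellOrderingRel.isWellOrder
  set r : I × I → I × I → Prop := WellOrderingRel with hr
  have hP : #(I × I) < lam := by
    have h1 : #(I × I) = #I * #I := by simp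
    rw [h1]; exact Cardinal.mul_lt_of_lt haleph hI hI
  have hOpt : ∀ (σ : Type u), #σ ≤ #(I × I) → #(Option σ) < lam := by
    intro σ h
    rw [Cardinal.mk_option]
    exact Cardinal.add_lt_of_lt haleph (h.trans_lt hP)
      (lt_of_lt_of_le Cardinal.one_lt_aleph0 haleph)
  -- sup operator for small families
  have supEx : ∀ (σ : Type u), #σ < lam → ∀ g : σ → (Σ β : K, (Set.Iio β → Bool)),
      ∃ s, (∀ i j, SeqLE (g i) (g j) ∨ SeqLE (g j) (g i)) → ∀ i, SeqLE (g i) s := by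
    intro σ hσ g
    obtain ⟨b, hb⟩ := hbdd' (fun i => (g i).1) hσ
    exact ⟨seqSup g b hb, fun hdir i => seqSup_le g b hb hdir i⟩
  choose Sup hSup using supEx
  -- density + difference step
  have dstep : ∀ s t : (Σ β : K, (Set.Iio β → Bool)), ∃ s' t',
      SeqLE s s' ∧ SeqLE t t' ∧ (s', t') ∈ D ∧
      ∃ (x : K) (h0 : x < s'.1) (h1 : x < t'.1), s'.2 ⟨x, h0⟩ ≠ t'.2 ⟨x, h1⟩ := by
    intro s t
    obtain ⟨⟨s1, t1⟩, hmem, hs1, ht1⟩ := hD.1 (s, t)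
    obtain ⟨c, hc⟩ := hsucc (max s1.1 t1.1)
    have h0 : max s1.1 t1.1 < (seqExt s1 c false).1 :=
      lt_of_lt_of_le hc (seqExt_len _ _ _)
    have h1 : max s1.1 t1.1 < (seqExt t1 c true).1 :=
      lt_of_lt_of_le hc (seqExt_len _ _ _)
    refine ⟨seqExt s1 c false, seqExt t1 c true,
      seqLE_trans hs1 (seqLE_seqExt _ _ _), seqLE_trans ht1 (seqLE_seqExt _ _ _),
      hD.2 _ hmem _ (seqLE_seqExt _ _ _) (seqLE_seqExt _ _ _),
      max s1.1 t1.1, h0, h1, ?_⟩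
    rw [seqExt_val_ge s1 c false _ (le_max_left _ _) h0,
      seqExt_val_ge t1 c true _ (le_max_right _ _) h1]
    simp
  choose ext0 ext1 hext0 hext1 hextD hextd using dstep
  have hPq : ∀ p : I × I, #(Option {q // r q p}) < lam :=
    fun p => hOpt _ (Cardinal.mk_subtype_le _)
  -- the recursion
  let prior : ∀ p : I × I, (∀ q, r q p → I → (Σ β : K, (Set.Iio β → Bool))) → I →
      (Σ β : K, (Set.Iio β → Bool)) :=
    fun p prev u => Sup _ (hPq p)
      (fun o => Option.elim o (base u) (fun q => prev q.1 q.2 u))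
  let F : ∀ p : I × I, (∀ q, r q p → I → (Σ β : K, (Set.Iio β → Bool))) → I →
      (Σ β : K, (Set.Iio β → Bool)) :=
    fun p prev u =>
      if u = p.1 then ext0 (prior p prev p.1) (prior p prev p.2)
      else if u = p.2 then ext1 (prior p prev p.1) (prior p prev p.2)
      else prior p prev u
  let G : I × I → I → (Σ β : K, (Set.Iio β → Bool)) := IsWellFounded.fix r F
  have hG : ∀ p u, G p u =
      (if u = p.1 then ext0 (prior p (fun q _ => G q) p.1) (prior p (fun q _ => G q) p.2)
      else if u = p.2 then ext1 (prior p (fun q _ => G q) p.1) (prior p (fun q _ => G q) p.2)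
      else prior p (fun q _ => G q) u) := by
    intro p u
    exact congrFun (IsWellFounded.fix_eq r F p) u
  -- monotonicity
  have hmono : ∀ p : I × I, (∀ u, SeqLE (base u) (G p u)) ∧
      (∀ q, r q p → ∀ u, SeqLE (G q u) (G p u)) := by
    intro p
    refine IsWellFounded.induction r
      (motive := fun p => (∀ u, SeqLE (base u) (G p u)) ∧
        (∀ q, r q p → ∀ u, SeqLE (G q u) (G p u))) p ?_
    intro p IH
    have hfam : ∀ u, ∀ o : Option {q // r q p},
        SeqLE (Option.elim o (base u) (fun q => G q.1 u)) (prior p (fun q _ => G q) u) := by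
      intro u o
      refine hSup _ (hPq p)
        (fun o => Option.elim o (base u) (fun q : {q // r q p} => G q.1 u)) ?_ o
      rintro (_ | ⟨q1⟩) (_ | ⟨q2⟩)
      · left; exact seqLE_refl _
      · left; exact (IH q2.1 q2.2).1 u
      · right; exact (IH q1.1 q1.2).1 u
      · rcases trichotomous_of r q1.1 q2.1 with h | h | h
        · left; exact (IH q2.1 q2.2).2 q1.1 h u
        · left; show SeqLE (G q1.1 u) (G q2.1 u); rw [h]; exact seqLE_refl _
        · right; exact (IH q1.1 q1.2).2 q2.1 h u
    have hstep : ∀ u, SeqLE (prior p (fun q _ => G q) u) (G p u) := by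
      intro u
      rw [hG p u]
      by_cases h1 : u = p.1
      · rw [if_pos h1, h1]; exact hext0 _ _
      · rw [if_neg h1]
        by_cases h2 : u = p.2
        · rw [if_pos h2, h2]; exact hext1 _ _
        · rw [if_neg h2]; exact seqLE_refl _
    exact ⟨fun u => seqLE_trans (hfam u none) (hstep u),
      fun q hq u => seqLE_trans (hfam u (some ⟨q, hq⟩)) (hstep u)⟩
  -- the pair (u,v) is handled at step (u,v)
  have hpair : ∀ u v : I, u ≠ v → ((G (u, v) u, G (u, v) v) ∈ D ∧
      ∃ x h0 h1, (G (u, v) u).2 ⟨x, h0⟩ ≠ (G (u, v) v).2 ⟨x, h1⟩) := by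
    intro u v huv
    have e1 : G (u, v) u = ext0 (prior (u, v) (fun q _ => G q) u)
        (prior (u, v) (fun q _ => G q) v) := by
      rw [hG]; rw [if_pos rfl]
    have e2 : G (u, v) v = ext1 (prior (u, v) (fun q _ => G q) u)
        (prior (u, v) (fun q _ => G q) v) := by
      rw [hG]; rw [if_neg (fun hcon => huv hcon.symm), if_pos rfl]
    rw [e1, e2]
    exact ⟨hextD _ _, hextd _ _⟩
  -- final
  have hOpt2 : #(Option (I × I)) < lam := by
    rw [Cardinal.mk_option]
    exact Cardinal.add_lt_of_lt haleph hP (lt_of_lt_of_le Cardinal.one_lt_aleph0 haleph)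
  let final : I → (Σ β : K, (Set.Iio β → Bool)) :=
    fun u => Sup _ hOpt2 (fun o => Option.elim o (base u) (fun p => G p u))
  have hfin : ∀ u (o : Option (I × I)),
      SeqLE (Option.elim o (base u) (fun p => G p u)) (final u) := by
    intro u o
    refine hSup _ hOpt2 (fun o => Option.elim o (base u) (fun p => G p u)) ?_ o
    rintro (_ | ⟨p⟩) (_ | ⟨q⟩)
    · left; exact seqLE_refl _
    · left; exact (hmono q).1 u
    · right; exact (hmono p).1 u
    · rcases trichotomous_of r p q with h | h | h
      · left; exact (hmono q).2 p h u
      · left; show SeqLE (G p u) (G q u); rw [h]; exact seqLE_refl _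
      · right; exact (hmono p).2 q h u
  refine ⟨final, fun u => hfin u none, ?_⟩
  intro u v huv
  obtain ⟨hmem, x, h0, h1, hne⟩ := hpair u v huv
  have l0 : SeqLE (G (u, v) u) (final u) := hfin u (some (u, v))
  have l1 : SeqLE (G (u, v) v) (final v) := hfin v (some (u, v))
  refine ⟨hD.2 _ hmem _ l0 l1, x, lt_of_lt_of_le h0 (seqLE_len l0),
    lt_of_lt_of_le h1 (seqLE_len l1), ?_⟩
  rw [← seqLE_val l0 x h0 (lt_of_lt_of_le h0 (seqLE_len l0)),
    ← seqLE_val l1 x h1 (lt_of_lt_of_le h1 (seqLE_len l1))]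
  exact hne

end PairGen
section Tree

variable {K : Type u} [Preorder K]

/-- Restriction of a tree node to a lower level. -/
def resNode {T : Set (Σ β : K, (Set.Iio β → K))}
    (hT : ∀ p ∈ T, ∀ γ : K, ∀ h : γ ≤ p.1,
      (⟨γ, fun i => p.2 ⟨i.1, lt_of_lt_of_le i.2 h⟩⟩ : Σ β : K, (Set.Iio β → K)) ∈ T)
    {β : K} (u : {f : Set.Iio β → K // (⟨β, f⟩ : Σ β : K, (Set.Iio β → K)) ∈ T})
    (γ : K) (h : γ ≤ β) :
    {f : Set.Iio γ → K // (⟨γ, f⟩ : Σ β : K, (Set.Iio β → K)) ∈ T} :=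
  ⟨fun i => u.1 ⟨i.1, lt_of_lt_of_le i.2 h⟩, hT ⟨β, u.1⟩ u.2 γ h⟩

theorem resNode_resNode {T : Set (Σ β : K, (Set.Iio β → K))}
    (hT : ∀ p ∈ T, ∀ γ : K, ∀ h : γ ≤ p.1,
      (⟨γ, fun i => p.2 ⟨i.1, lt_of_lt_of_le i.2 h⟩⟩ : Σ β : K, (Set.Iio β → K)) ∈ T)
    {β : K} (u : {f : Set.Iio β → K // (⟨β, f⟩ : Σ β : K, (Set.Iio β → K)) ∈ T})
    {γ' γ : K} (h' : γ' ≤ β) (h : γ ≤ γ') :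
    resNode hT (resNode hT u γ' h') γ h = resNode hT u γ (h.trans h') :=
  Subtype.ext rfl

end Tree
/-- The type of nodes of `T` at level `β`. -/
def NodeT {K : Type u} [Preorder K] (T : Set (Σ β : K, (Set.Iio β → K))) (β : K) : Type u :=
  {f : Set.Iio β → K // (⟨β, f⟩ : Σ β : K, (Set.Iio β → K)) ∈ T}
theorem stmt11 (lam : Cardinal) (hlam : Cardinal.aleph0 < lam)
    (harith : lam ^< lam = lam)
    -- a tree with λ levels, each of cardinality < λ, with 2^λ branches of length λ
    (T : Set (Σ β : lam.ord.ToType, (Set.Iio β → lam.ord.ToType)))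
    (hT_closed : ∀ p ∈ T, ∀ γ : lam.ord.ToType, ∀ h : γ ≤ p.1,
      (⟨γ, fun i => p.2 ⟨i.1, lt_of_lt_of_le i.2 h⟩⟩ :
        Σ β : lam.ord.ToType, (Set.Iio β → lam.ord.ToType)) ∈ T)
    (hT_levels : ∀ β : lam.ord.ToType,
      Cardinal.mk {f : Set.Iio β → lam.ord.ToType |
        (⟨β, f⟩ : Σ β : lam.ord.ToType, (Set.Iio β → lam.ord.ToType)) ∈ T} < lam)
    (hT_branches : Cardinal.mk {b : lam.ord.ToType → lam.ord.ToType |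
      ∀ β : lam.ord.ToType,
        (⟨β, fun i => b i.1⟩ : Σ β : lam.ord.ToType, (Set.Iio β → lam.ord.ToType)) ∈ T} =
      2 ^ lam)
    -- a family of at most λ dense open subsets of (^{<λ}2) × (^{<λ}2)
    (𝒟 : Set (Set ((Σ β : lam.ord.ToType, (Set.Iio β → Bool)) ×
      (Σ β : lam.ord.ToType, (Set.Iio β → Bool)))))
    (h𝒟card : Cardinal.mk 𝒟 ≤ lam)
    (h𝒟 : ∀ D ∈ 𝒟, PairDenseOpen D) :
    ∃ X : Set (lam.ord.ToType → Bool),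
      Cardinal.mk X = 2 ^ lam ∧
      ∀ η₀ ∈ X, ∀ η₁ ∈ X, η₀ ≠ η₁ → ∀ D ∈ 𝒟,
        ∃ α : lam.ord.ToType,
          ((⟨α, fun i => η₀ i.1⟩, ⟨α, fun i => η₁ i.1⟩) :
            (Σ β : lam.ord.ToType, (Set.Iio β → Bool)) ×
            (Σ β : lam.ord.ToType, (Set.Iio β → Bool))) ∈ D := by
  classical
  have haleph : Cardinal.aleph0 ≤ lam := hlam.le
  have mkK : #(lam.ord.ToType) = lam := by rw [Cardinal.mk_toType, Cardinal.card_ord]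
  have hcof : lam.ord.cof = lam := by
    refine le_antisymm (Ordinal.cof_ord_le lam) ?_
    by_contra hc
    push_neg at hc
    have h1 := Cardinal.lt_power_cof haleph
    have h2 := Cardinal.le_powerlt (b := lam) lam hc
    rw [harith] at h2
    exact absurd (h1.trans_le h2) (lt_irrefl _)
  set iso := Ordinal.ToType.mk (o := lam.ord) with hiso
  -- boundedness of small subsets of K
  have hbdd : ∀ s : Set lam.ord.ToType, #s < lam → BddAbove s := by
    intro s hs
    have hsup : (⨆ i : s, ((iso.symm i.1 : Set.Iio lam.ord) : Ordinal)) < lam.ord :=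
      Ordinal.iSup_lt_ord (by rwa [hcof]) (fun i => (iso.symm i.1).2)
    refine ⟨iso ⟨_, hsup⟩, fun x hx => ?_⟩
    have h1 : ((iso.symm x : Set.Iio lam.ord) : Ordinal) ≤
        ⨆ i : s, ((iso.symm i.1 : Set.Iio lam.ord) : Ordinal) :=
      Ordinal.le_iSup (fun i : s => ((iso.symm i.1 : Set.Iio lam.ord) : Ordinal)) ⟨x, hx⟩
    have h2 : iso.symm x ≤ ⟨_, hsup⟩ := Subtype.coe_le_coe.mp h1
    calc x = iso (iso.symm x) := (iso.apply_symm_apply x).symm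
      _ ≤ iso ⟨_, hsup⟩ := iso.le_iff_le.mpr h2
  -- initial segments are small
  have hIio : ∀ β : lam.ord.ToType, #(Set.Iio β) < lam := by
    intro β
    have hcard : ((iso.symm β : Set.Iio lam.ord) : Ordinal).card < lam :=
      Cardinal.lt_ord.mp (iso.symm β).2
    have key : ∀ x : Set.Iio β,
        ((iso.symm x.1 : Set.Iio lam.ord) : Ordinal) < (iso.symm β : Set.Iio lam.ord) :=
      fun x => Subtype.coe_lt_coe.mpr (iso.symm.lt_iff_lt.mpr x.2)
    have hinj : Function.Injective (fun x : Set.Iio β =>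
        (Ordinal.ToType.mk (o := ((iso.symm β : Set.Iio lam.ord) : Ordinal)))
        ⟨((iso.symm x.1 : Set.Iio lam.ord) : Ordinal), key x⟩) := by
      intro x y hxy
      have h1 := (Ordinal.ToType.mk (o := _)).injective hxy
      have h1' := congrArg Subtype.val h1
      have h2 : (iso.symm x.1) = iso.symm y.1 := Subtype.ext h1'
      exact Subtype.ext (iso.symm.injective h2)
    have := Cardinal.mk_le_of_injective hinj
    rw [Cardinal.mk_toType] at this
    exact this.trans_lt hcard
  -- successors exist
  haveI : NoMaxOrder lam.ord.ToType := Cardinal.noMaxOrder haleph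
  have hsucc : ∀ x : lam.ord.ToType, ∃ y, x < y := fun x => exists_gt x
  -- bookkeeping function for the dense sets
  obtain ⟨e, he, hecof⟩ : ∃ e : lam.ord.ToType →
      Set ((Σ β : lam.ord.ToType, (Set.Iio β → Bool)) ×
        (Σ β : lam.ord.ToType, (Set.Iio β → Bool))),
      (∀ β, PairDenseOpen (e β)) ∧ ∀ D ∈ 𝒟, ∀ γ, ∃ β, γ ≤ β ∧ e β = D := by
    rcases Set.eq_empty_or_nonempty 𝒟 with h𝒟e | ⟨D0, hD0⟩
    · refine ⟨fun _ => Set.univ, fun β =>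
        ⟨fun p => ⟨p, Set.mem_univ _, seqLE_refl _, seqLE_refl _⟩,
          fun _ _ q _ _ => Set.mem_univ q⟩, ?_⟩
      intro D hD
      rw [h𝒟e] at hD
      exact absurd hD (Set.notMem_empty D)
    · haveI : Nonempty ↥𝒟 := ⟨⟨D0, hD0⟩⟩
      haveI : Nonempty lam.ord.ToType :=
        Cardinal.mk_ne_zero_iff.mp (by rw [mkK]; exact (Cardinal.aleph0_pos.trans hlam).ne')
      have h𝒟K : #(↥𝒟 × lam.ord.ToType) ≤ #(lam.ord.ToType) := by
        rw [mkK]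
        have h1 : #(↥𝒟 × lam.ord.ToType) = #↥𝒟 * #(lam.ord.ToType) := by simp
        rw [h1, mkK]
        calc #↥𝒟 * lam ≤ lam * lam := mul_le_mul_left h𝒟card lam
          _ = lam := Cardinal.mul_eq_self haleph
      obtain ⟨emb⟩ := Cardinal.le_def _ _ |>.mp h𝒟K
      have hsurj := Function.invFun_surjective emb.injective
      refine ⟨fun β => ((Function.invFun emb β).1 : Set _),
        fun β => h𝒟 _ (Function.invFun emb β).1.2, ?_⟩
      intro D hD γ
      by_contra hc
      push_neg at hc
      have hj : ∀ δ, ∃ β, Function.invFun emb β = (⟨D, hD⟩, δ) := fun δ => hsurj _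
      choose j hjs using hj
      have hjD : ∀ δ, ((Function.invFun emb (j δ)).1 : Set _) = D := fun δ => by rw [hjs δ]
      have hlt : ∀ δ, j δ < γ := fun δ => not_le.mp (fun hle => hc (j δ) hle (hjD δ))
      have hinj : Function.Injective (fun δ => (⟨j δ, hlt δ⟩ : Set.Iio γ)) := by
        intro a b hab
        have h1 : j a = j b := congrArg Subtype.val hab
        have h2 : ((⟨D, hD⟩, a) : ↥𝒟 × lam.ord.ToType) = (⟨D, hD⟩, b) := by
          rw [← hjs a, ← hjs b, h1]
        exact congrArg Prod.snd h2
      have := Cardinal.mk_le_of_injective hinj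
      rw [mkK] at this
      exact absurd this (not_le.mpr (hIio γ))
  -- level cardinalities
  have hlev : ∀ β, #(NodeT T β) < lam := fun β => hT_levels β
  -- sup operator for families indexed by initial segments
  have supEx : ∀ (β : lam.ord.ToType)
      (g : Set.Iio β → (Σ β : lam.ord.ToType, (Set.Iio β → Bool))),
      ∃ s, (∀ i j, SeqLE (g i) (g j) ∨ SeqLE (g j) (g i)) → ∀ i, SeqLE (g i) s := by
    intro β g
    obtain ⟨b, hb⟩ := hbdd (Set.range fun i => (g i).1)
      (Cardinal.mk_range_le.trans_lt (hIio β))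
    exact ⟨seqSup g b (fun i => hb (Set.mem_range_self i)),
      fun hdir i => seqSup_le g b _ hdir i⟩
  choose Sup hSup using supEx
  -- the generic extension operator at each level
  have finEx : ∀ (β : lam.ord.ToType) (bse : NodeT T β → (Σ β : lam.ord.ToType, (Set.Iio β → Bool))),
      ∃ final : NodeT T β → (Σ β : lam.ord.ToType, (Set.Iio β → Bool)),
        (∀ u, SeqLE (bse u) (final u)) ∧
        ∀ u v, u ≠ v → ((final u, final v) ∈ e β ∧
          ∃ (x : lam.ord.ToType) (h0 : x < (final u).1) (h1 : x < (final v).1),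
            (final u).2 ⟨x, h0⟩ ≠ (final v).2 ⟨x, h1⟩) :=
    fun β bse => exists_pairwise_generic lam haleph hbdd hsucc (hlev β) (e β) (he β) bse
  choose Fin hFin1 hFin2 using finEx
  -- the recursive construction
  let stp : ∀ β : lam.ord.ToType,
      (∀ γ, γ < β → NodeT T γ → (Σ β : lam.ord.ToType, (Set.Iio β → Bool))) →
      NodeT T β → (Σ β : lam.ord.ToType, (Set.Iio β → Bool)) :=
    fun β prev => Fin β (fun u => seqExt
      (Sup β (fun γ : Set.Iio β => prev γ.1 γ.2 (resNode hT_closed u γ.1 γ.2.le))) β false)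
  let A : ∀ β : lam.ord.ToType, NodeT T β → (Σ β : lam.ord.ToType, (Set.Iio β → Bool)) :=
    IsWellFounded.fix (· < ·) stp
  have hA : ∀ β, A β = Fin β (fun u => seqExt
      (Sup β (fun γ : Set.Iio β => A γ.1 (resNode hT_closed u γ.1 γ.2.le))) β false) :=
    fun β => IsWellFounded.fix_eq (· < ·) stp β
  have hbase : ∀ β (u : NodeT T β), SeqLE (seqExt
      (Sup β (fun γ : Set.Iio β => A γ.1 (resNode hT_closed u γ.1 γ.2.le))) β false) (A β u) := by
    intro β u
    conv_rhs => rw [hA β]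
    exact hFin1 β (fun u => seqExt
      (Sup β (fun γ : Set.Iio β => A γ.1 (resNode hT_closed u γ.1 γ.2.le))) β false) u
  -- coherence
  have hmono : ∀ β : lam.ord.ToType, ∀ γ (h : γ < β) (u : NodeT T β),
      SeqLE (A γ (resNode hT_closed u γ h.le)) (A β u) := by
    refine fun β => IsWellFounded.induction (α := lam.ord.ToType) (· < ·)
      (motive := fun β => ∀ γ (h : γ < β) (u : NodeT T β),
        SeqLE (A γ (resNode hT_closed u γ h.le)) (A β u)) β ?_
    intro β IH γ h u
    have hdir : ∀ i j : Set.Iio β,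
        SeqLE (A i.1 (resNode hT_closed u i.1 i.2.le)) (A j.1 (resNode hT_closed u j.1 j.2.le)) ∨
        SeqLE (A j.1 (resNode hT_closed u j.1 j.2.le)) (A i.1 (resNode hT_closed u i.1 i.2.le)) := by
      intro i j
      rcases lt_trichotomy i.1 j.1 with hij | hij | hij
      · left
        have := IH j.1 j.2 i.1 hij (resNode hT_closed u j.1 j.2.le)
        exact this
      · left
        have : i = j := Subtype.ext hij
        rw [this]
        exact seqLE_refl _
      · right
        have := IH i.1 i.2 j.1 hij (resNode hT_closed u i.1 i.2.le)
        exact this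
    have h1 : SeqLE (A γ (resNode hT_closed u γ h.le))
        (Sup β (fun γ : Set.Iio β => A γ.1 (resNode hT_closed u γ.1 γ.2.le))) :=
      hSup β _ hdir ⟨γ, h⟩
    exact seqLE_trans h1 (seqLE_trans (seqLE_seqExt _ _ _) (hbase β u))
  -- lengths grow
  have hlen : ∀ β (u : NodeT T β), β ≤ (A β u).1 :=
    fun β u => le_trans (seqExt_len _ β false) (seqLE_len (hbase β u))
  -- pair genericity at each level
  have hpairs : ∀ β (u v : NodeT T β), u ≠ v → ((A β u, A β v) ∈ e β ∧
      ∃ x h0 h1, (A β u).2 ⟨x, h0⟩ ≠ (A β v).2 ⟨x, h1⟩) := by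
    intro β u v huv
    rw [hA β]
    exact hFin2 β _ u v huv
  -- branches
  let Br := {b : lam.ord.ToType → lam.ord.ToType //
    ∀ β : lam.ord.ToType, (⟨β, fun i => b i.1⟩ :
      Σ β : lam.ord.ToType, (Set.Iio β → lam.ord.ToType)) ∈ T}
  let nodeOf : Br → ∀ β, NodeT T β := fun b β => ⟨fun i => b.1 i.1, b.2 β⟩
  have hcoh : ∀ (b : Br) (β β' : lam.ord.ToType), β ≤ β' →
      SeqLE (A β (nodeOf b β)) (A β' (nodeOf b β')) := by
    intro b β β' hle
    rcases eq_or_lt_of_le hle with rfl | hlt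
    · exact seqLE_refl _
    · have h1 := hmono β' β hlt (nodeOf b β')
      have h2 : resNode hT_closed (nodeOf b β') β hlt.le = nodeOf b β := Subtype.ext rfl
      rwa [h2] at h1
  -- the generic functions
  let η : Br → lam.ord.ToType → Bool := fun b i =>
    (A (hsucc i).choose (nodeOf b (hsucc i).choose)).2
      ⟨i, lt_of_lt_of_le (hsucc i).choose_spec (hlen _ _)⟩
  have ηval : ∀ (b : Br) (i : lam.ord.ToType) (β : lam.ord.ToType)
      (h : i < (A β (nodeOf b β)).1), (A β (nodeOf b β)).2 ⟨i, h⟩ = η b i := by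
    intro b i β h
    show _ = (A (hsucc i).choose (nodeOf b (hsucc i).choose)).2
      ⟨i, lt_of_lt_of_le (hsucc i).choose_spec (hlen _ _)⟩
    rcases le_total β (hsucc i).choose with hle | hle
    · exact seqLE_val (hcoh b _ _ hle) i h _
    · exact (seqLE_val (hcoh b _ _ hle) i _ h).symm
  -- injectivity
  have hηinj : Function.Injective η := by
    intro b b' hbb
    by_contra hne
    have hex : ∃ i, b.1 i ≠ b'.1 i := by
      by_contra hc
      push_neg at hc
      exact hne (Subtype.ext (funext hc))
    obtain ⟨i, hi⟩ := hex
    obtain ⟨β, hβ⟩ := hsucc i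
    have hnodes : nodeOf b β ≠ nodeOf b' β := by
      intro hcon
      exact hi (congrArg (fun n : NodeT T β => n.1 ⟨i, hβ⟩) hcon)
    obtain ⟨-, x, h0, h1, hx⟩ := hpairs β _ _ hnodes
    rw [ηval b x β h0, ηval b' x β h1, hbb] at hx
    exact hx rfl
  refine ⟨Set.range η, ?_, ?_⟩
  · rw [Cardinal.mk_range_eq η hηinj]
    exact hT_branches
  · rintro η₀ ⟨b₀, rfl⟩ η₁ ⟨b₁, rfl⟩ hne D hD
    have hbb : b₀ ≠ b₁ := fun hcon => hne (by rw [hcon])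
    have hex : ∃ i, b₀.1 i ≠ b₁.1 i := by
      by_contra hc
      push_neg at hc
      exact hbb (Subtype.ext (funext hc))
    obtain ⟨i, hi⟩ := hex
    obtain ⟨γ, hγ⟩ := hsucc i
    obtain ⟨β, hγβ, heD⟩ := hecof D hD γ
    have hnodes : nodeOf b₀ β ≠ nodeOf b₁ β := by
      intro hcon
      exact hi (congrArg (fun n : NodeT T β => n.1 ⟨i, lt_of_lt_of_le hγ hγβ⟩) hcon)
    obtain ⟨hmem, -⟩ := hpairs β _ _ hnodes
    rw [heD] at hmem
    refine ⟨max (A β (nodeOf b₀ β)).1 (A β (nodeOf b₁ β)).1, ?_⟩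
    have l0 : SeqLE (A β (nodeOf b₀ β))
        ⟨max (A β (nodeOf b₀ β)).1 (A β (nodeOf b₁ β)).1, fun j => η b₀ j.1⟩ :=
      ⟨le_max_left _ _, fun j => ηval b₀ j.1 β j.2⟩
    have l1 : SeqLE (A β (nodeOf b₁ β))
        ⟨max (A β (nodeOf b₀ β)).1 (A β (nodeOf b₁ β)).1, fun j => η b₁ j.1⟩ :=
      ⟨le_max_right _ _, fun j => ηval b₁ j.1 β j.2⟩
    exact (h𝒟 D hD).2 _ hmem _ l0 l1
end

section
/- Let E be a Borel equivalence relation on the Cantor space ^ω2 such that whenever η, ν ∈ ^ω2 differ in exactly one coordinate, η and ν are not E-equivalent. Then there is a perfect subset of ^ω2 whose members are pairwise E-inequivalent; in particular E has 2^{ℵ₀} equivalence classes. -/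
/-!
An `E`-class is a Borel set containing no two sequences that differ in exactly one coordinate.
If it were non-meagre it would be comeagre in some cylinder `[x↾n]`; flipping coordinate `n` is a
homeomorphism preserving that cylinder, so some `x` in it would lie in the class together with its
flip. Hence every class is meagre, and by (one half of) the Kuratowski–Ulam theorem the Borel set
`E ⊆ 2^ω × 2^ω` is meagre. Mycielski's argument then yields a continuous injection `f` of Cantor
space with pairwise `E`-inequivalent values: `f` is the limit map of a splitting tree of finite
words, built level by level so that any two distinct nodes of level `n` span a box inside the
`n`-th dense open set avoiding `E`. Its range is the perfect set, and it meets `2^ℵ₀` classes.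
-/

open Set Filter Function TopologicalSpace

section Baire

variable {X Y : Type*} [TopologicalSpace X] [TopologicalSpace Y]

theorem BaireMeasurableSet.exists_isOpen_eventually_mem_of_not_isMeagre {A : Set X}
    (hA : BaireMeasurableSet A) (hA' : ¬IsMeagre A) :
    ∃ U, IsOpen U ∧ U.Nonempty ∧ ∀ᶠ x in residual X, x ∈ U → x ∈ A := by
  obtain ⟨U, hUo, hAU⟩ := hA.residualEq_isOpen
  refine ⟨U, hUo, nonempty_iff_ne_empty.2 fun hU => hA' ?_, ?_⟩
  · rw [hU] at hAU
    exact eventuallyEq_empty.1 hAU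
  · filter_upwards [eventuallyEq_set.1 hAU] with x hx using hx.2

theorem exists_mem_and_apply_mem_of_eventually_mem [BaireSpace X] {A U : Set X}
    (hA : ∀ᶠ x in residual X, x ∈ U → x ∈ A) (hU : IsOpen U) (hU' : U.Nonempty)
    (φ : X ≃ₜ X) (hφ : MapsTo φ U U) : ∃ x, x ∈ A ∧ φ x ∈ A := by
  have hφA : ∀ᶠ x in residual X, φ x ∈ U → φ x ∈ A := by
    rw [← φ.residual_map_eq] at hA
    exact hA
  obtain ⟨x, ⟨hx, hφx⟩, hxU⟩ :=
    (dense_of_mem_residual (hA.and hφA)).exists_mem_open hU hU'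
  exact ⟨x, hx hxU, hφx (hφ hxU)⟩

theorem eventually_residual_dense_preimage_prodMk [SecondCountableTopology Y] {V : Set (X × Y)}
    (hVo : IsOpen V) (hVd : Dense V) : ∀ᶠ x in residual X, Dense (Prod.mk x ⁻¹' V) := by
  have hmeets : ∀ B ∈ countableBasis Y, ∀ᶠ x in residual X, (B ∩ Prod.mk x ⁻¹' V).Nonempty := by
    intro B hB
    have hBo := isOpen_of_mem_countableBasis hB
    refine residual_of_dense_open ?_ ?_
    · have : {x | (B ∩ Prod.mk x ⁻¹' V).Nonempty} = Prod.fst '' (V ∩ Prod.snd ⁻¹' B) := by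
        ext x; simp [and_comm, Set.Nonempty]
      rw [this]
      exact isOpenMap_fst _ (hVo.inter (hBo.preimage continuous_snd))
    · rw [dense_iff_inter_open]
      rintro O hO ⟨x, hx⟩
      obtain ⟨p, hpV, hpO, hpB⟩ := hVd.exists_mem_open (hO.prod hBo)
        ⟨(x, _), hx, (nonempty_of_mem_countableBasis hB).some_mem⟩
      exact ⟨p.1, hpO, p.2, hpB, hpV⟩
  filter_upwards [(eventually_countable_ball (countable_countableBasis Y)).2 hmeets] with x hx
  exact (isBasis_countableBasis Y).dense_iff.2 fun B hB _ => hx B hB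

theorem eventually_residual_preimage_prodMk_mem_residual [SecondCountableTopology Y]
    {s : Set (X × Y)} (hs : s ∈ residual (X × Y)) :
    ∀ᶠ x in residual X, Prod.mk x ⁻¹' s ∈ residual Y := by
  obtain ⟨S, hSo, hSd, hSc, hSs⟩ := mem_residual_iff.1 hs
  filter_upwards [(eventually_countable_ball hSc).2 fun V hV =>
    eventually_residual_dense_preimage_prodMk (hSo V hV) (hSd V hV)] with x hx
  refine mem_of_superset ((countable_bInter_mem hSc).2 fun V hV => residual_of_dense_open
    ((hSo V hV).preimage (continuous_const.prodMk continuous_id)) (hx V hV)) fun y hy => ?_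
  exact hSs (mem_sInter.2 fun V hV => mem_iInter₂.1 hy V hV)

theorem BaireMeasurableSet.isMeagre_of_eventually_isMeagre_preimage_prodMk [BaireSpace X]
    [BaireSpace Y] [SecondCountableTopology Y] {A : Set (X × Y)} (hA : BaireMeasurableSet A)
    (h : ∀ᶠ x in residual X, IsMeagre (Prod.mk x ⁻¹' A)) : IsMeagre A := by
  by_contra hA'
  obtain ⟨U, hUo, ⟨p, hp⟩, hAU⟩ := hA.exists_isOpen_eventually_mem_of_not_isMeagre hA'
  obtain ⟨u, v, hu, hv, hpu, hpv, huv⟩ := isOpen_prod_iff.1 hUo p.1 p.2 hp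
  obtain ⟨x, ⟨hxA, hxA'⟩, hxu⟩ := (dense_of_mem_residual
    (h.and (eventually_residual_preimage_prodMk_mem_residual hAU))).exists_mem_open hu ⟨_, hpu⟩
  refine not_isMeagre_of_isOpen hv ⟨_, hpv⟩ ?_
  exact mem_of_superset (inter_mem hxA hxA') fun y ⟨hyA, hyUA⟩ hyv => hyA (hyUA (huv ⟨hxu, hyv⟩))

end Baire

instance Pi.perfectSpace {ι : Type*} {E : ι → Type*} [∀ i, TopologicalSpace (E i)] [Infinite ι]
    [∀ i, Nontrivial (E i)] : PerfectSpace (∀ i, E i) := by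
  classical
  refine ⟨preperfect_iff_nhds.2 fun x _ U hU => ?_⟩
  obtain ⟨I, u, hxu, hIU⟩ := isOpen_pi_iff.1 isOpen_interior x (mem_interior_iff_mem_nhds.2 hU)
  obtain ⟨i, hi⟩ := Infinite.exists_notMem_finset I
  obtain ⟨y, hy⟩ := exists_ne (x i)
  refine ⟨update x i y, ⟨interior_subset (hIU fun j hj => ?_), trivial⟩, fun h => hy ?_⟩
  · rw [update_of_ne (ne_of_mem_of_not_mem hj hi)]
    exact (hxu j hj).2
  · simpa using congrFun h i

theorem preperfect_range_of_continuous_of_injective {X Y : Type*} [TopologicalSpace X]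
    [TopologicalSpace Y] [PerfectSpace X] {f : X → Y} (hf : Continuous f) (hinj : Injective f) :
    Preperfect (range f) := by
  rintro _ ⟨x, rfl⟩
  rw [accPt_iff_nhds]
  intro U hU
  obtain ⟨x', ⟨hx'U, -⟩, hx'⟩ :=
    preperfect_iff_nhds.1 PerfectSpace.univ_preperfect x trivial _ (hf.continuousAt hU)
  exact ⟨f x', ⟨hx'U, x', rfl⟩, hinj.ne hx'⟩

def flipAt (n : ℕ) : (ℕ → Bool) ≃ₜ (ℕ → Bool) where
  toEquiv := Involutive.toPerm (fun x => update x n (!x n)) fun x => by simp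
  continuous_toFun := continuous_id.update n <|
    (continuous_of_discreteTopology (f := not)).comp (continuous_apply n)
  continuous_invFun := continuous_id.update n <|
    (continuous_of_discreteTopology (f := not)).comp (continuous_apply n)

@[simp]
theorem flipAt_apply (n : ℕ) (x : ℕ → Bool) : flipAt n x = update x n (!x n) := rfl

theorem BaireMeasurableSet.isMeagre_of_forall_update_notMem {A : Set (ℕ → Bool)}
    (hA : BaireMeasurableSet A) (h : ∀ x ∈ A, ∀ n, update x n (!x n) ∉ A) : IsMeagre A := by
  by_contra hA'
  obtain ⟨U, hUo, ⟨x₀, hx₀⟩, hAU⟩ := hA.exists_isOpen_eventually_mem_of_not_isMeagre hA'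
  obtain ⟨_, ⟨y, n, rfl⟩, hx₀y, hyU⟩ :=
    (PiNat.isTopologicalBasis_cylinders _).exists_subset_of_mem_open hx₀ hUo
  obtain ⟨x, hx, hx'⟩ := exists_mem_and_apply_mem_of_eventually_mem
    (hAU.mono fun x h hx => h (hyU hx)) (PiNat.isOpen_cylinder _ y n) ⟨x₀, hx₀y⟩ (flipAt n)
    fun x hx i hi => by simpa [update_of_ne hi.ne] using hx i hi
  exact h x hx n hx'

namespace CantorTree

variable {α : Type*}

def res (x : ℕ → α) (n : ℕ) : List α := (List.range n).map x

def cyl (l : List α) : Set (ℕ → α) := {x | res x l.length = l}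

@[simp]
theorem length_res (x : ℕ → α) (n : ℕ) : (res x n).length = n := by simp [res]

theorem res_succ (x : ℕ → α) (n : ℕ) : res x (n + 1) = res x n ++ [x n] := by
  simp [res, List.range_succ]

theorem res_eq_res_iff {x y : ℕ → α} {n : ℕ} : res x n = res y n ↔ ∀ k < n, x k = y k := by
  simp [res, List.map_inj_left]

theorem take_res (x : ℕ → α) {m n : ℕ} (h : m ≤ n) : (res x n).take m = res x m := by
  simp [res, ← List.map_take, List.take_range, h]

theorem res_prefix_res (x : ℕ → α) {m n : ℕ} (h : m ≤ n) : res x m <+: res x n := by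
  rw [← take_res x h]
  exact List.take_prefix _ _

theorem cyl_res (x : ℕ → α) (n : ℕ) : cyl (res x n) = PiNat.cylinder x n := by
  ext y
  simp [cyl, res_eq_res_iff, PiNat.mem_cylinder_iff]

theorem cyl_anti {l₁ l₂ : List α} (h : l₁ <+: l₂) : cyl l₂ ⊆ cyl l₁ := fun x (hx : _ = _) => by
  show res x l₁.length = l₁
  rw [← take_res x h.length_le, hx, ← List.prefix_iff_eq_take.1 h]

theorem prefix_res_of_mem_cyl {x : ℕ → α} {l : List α} (hx : x ∈ cyl l) {n : ℕ}
    (h : l.length ≤ n) : l <+: res x n :=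
  hx ▸ res_prefix_res x h

theorem mem_cyl_iff {x : ℕ → α} {l : List α} :
    x ∈ cyl l ↔ ∀ k (hk : k < l.length), x k = l[k]'hk := by
  simp [cyl, List.ext_get_iff, res]

theorem cyl_nonempty [Inhabited α] (l : List α) : (cyl l).Nonempty :=
  ⟨fun k => l.getD k default, mem_cyl_iff.2 fun _ hk => List.getD_eq_getElem _ _ hk⟩

def IsSplittingTree (σ : List α → List α) : Prop := ∀ s b, σ s ++ [b] <+: σ (s ++ [b])

namespace IsSplittingTree

variable {σ : List α → List α}

theorem le_length_res (hσ : IsSplittingTree σ) (a : ℕ → α) (n : ℕ) :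
    n ≤ (σ (res a n)).length := by
  induction n with
  | zero => simp
  | succ n ih =>
    have := (hσ (res a n) (a n)).length_le
    rw [← res_succ, List.length_append, List.length_singleton] at this
    omega

theorem res_prefix_res (hσ : IsSplittingTree σ) (a : ℕ → α) {m n : ℕ} (h : m ≤ n) :
    σ (res a m) <+: σ (res a n) := by
  induction n, h using Nat.le_induction with
  | base => exact List.prefix_refl _
  | succ n _ ih =>
    exact ih.trans ((List.prefix_append _ _).trans (res_succ a n ▸ hσ (res a n) (a n)))

end IsSplittingTree

-- For a splitting tree the default value is never read, by `IsSplittingTree.le_length_res`.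
def treeMap [Inhabited α] (σ : List α → List α) (a : ℕ → α) : ℕ → α :=
  fun k => (σ (res a (k + 1))).getD k default

section

variable [Inhabited α] {σ : List α → List α}

theorem IsSplittingTree.treeMap_mem_cyl (hσ : IsSplittingTree σ) (a : ℕ → α) (n : ℕ) :
    treeMap σ a ∈ cyl (σ (res a n)) := by
  refine mem_cyl_iff.2 fun k hk => ?_
  have hk' : k < (σ (res a (k + 1))).length := hσ.le_length_res a (k + 1)
  rw [treeMap, List.getD_eq_getElem _ _ hk',
    (hσ.res_prefix_res a (le_max_right n (k + 1))).getElem hk',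
    (hσ.res_prefix_res a (le_max_left n (k + 1))).getElem hk]

theorem IsSplittingTree.treeMap_apply_length (hσ : IsSplittingTree σ) (a : ℕ → α) (n : ℕ) :
    treeMap σ a (σ (res a n)).length = a n := by
  have hpre := res_succ a n ▸ hσ (res a n) (a n)
  have hk : (σ (res a n)).length < (σ (res a n) ++ [a n]).length := by simp
  rw [mem_cyl_iff.1 (hσ.treeMap_mem_cyl a (n + 1)) _ (hk.trans_le hpre.length_le),
    ← hpre.getElem hk, List.getElem_concat_length rfl]

theorem IsSplittingTree.injective_treeMap (hσ : IsSplittingTree σ) : Injective (treeMap σ) := by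
  intro a b hab
  have hres : ∀ n, res a n = res b n := by
    intro n
    induction n with
    | zero => rfl
    | succ n ih =>
      rw [res_succ, res_succ, ih, ← hσ.treeMap_apply_length a n, ← hσ.treeMap_apply_length b n,
        hab, ih]
  funext n
  exact res_eq_res_iff.1 (hres (n + 1)) n n.lt_add_one

end

variable [TopologicalSpace α] [DiscreteTopology α]

theorem continuous_treeMap [Inhabited α] (σ : List α → List α) : Continuous (treeMap σ) := by
  refine continuous_pi fun k => IsLocallyConstant.continuous ?_
  refine (IsLocallyConstant.iff_exists_open _).2 fun a => ⟨_, PiNat.isOpen_cylinder _ a (k + 1),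
    PiNat.self_mem_cylinder a (k + 1), fun a' ha' => ?_⟩
  simp only [treeMap, res_eq_res_iff.2 ha']

theorem isOpen_cyl (l : List α) : IsOpen (cyl l) := isOpen_iff_forall_mem_open.2 fun x hx =>
  ⟨cyl l, subset_rfl, by rw [← hx, cyl_res]; exact PiNat.isOpen_cylinder _ x _, hx⟩

theorem exists_cylinder_subset {U : Set (ℕ → α)} (hU : IsOpen U) {x : ℕ → α} (hx : x ∈ U) :
    ∃ n, PiNat.cylinder x n ⊆ U := by
  obtain ⟨_, ⟨y, n, rfl⟩, hxy, hyU⟩ :=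
    (PiNat.isTopologicalBasis_cylinders _).exists_subset_of_mem_open hx hU
  exact ⟨n, PiNat.mem_cylinder_iff_eq.1 hxy ▸ hyU⟩

theorem exists_cylinder_prod_subset {W : Set ((ℕ → α) × (ℕ → α))} (hW : IsOpen W)
    {p : (ℕ → α) × (ℕ → α)} (hp : p ∈ W) :
    ∃ n, PiNat.cylinder p.1 n ×ˢ PiNat.cylinder p.2 n ⊆ W := by
  obtain ⟨u, v, hu, hv, hpu, hpv, huv⟩ := isOpen_prod_iff.1 hW p.1 p.2 hp
  obtain ⟨m, hm⟩ := exists_cylinder_subset hu hpu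
  obtain ⟨n, hn⟩ := exists_cylinder_subset hv hpv
  refine ⟨max m n, (Set.prod_mono ?_ ?_).trans huv⟩
  · exact (PiNat.cylinder_anti _ (le_max_left m n)).trans hm
  · exact (PiNat.cylinder_anti _ (le_max_right m n)).trans hn

variable [Inhabited α]

theorem exists_prefix_cyl_prod_subset {W : Set ((ℕ → α) × (ℕ → α))} (hWo : IsOpen W)
    (hWd : Dense W) (u v : List α) : ∃ u' v', u <+: u' ∧ v <+: v' ∧ cyl u' ×ˢ cyl v' ⊆ W := by
  obtain ⟨p, hpW, hpu, hpv⟩ := hWd.exists_mem_open ((isOpen_cyl u).prod (isOpen_cyl v))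
    ((cyl_nonempty u).prod (cyl_nonempty v))
  obtain ⟨n, hn⟩ := exists_cylinder_prod_subset hWo hpW
  set N := max n (max u.length v.length)
  refine ⟨res p.1 N, res p.2 N, prefix_res_of_mem_cyl hpu (by omega),
    prefix_res_of_mem_cyl hpv (by omega), ?_⟩
  rw [cyl_res, cyl_res]
  exact (Set.prod_mono (PiNat.cylinder_anti _ (le_max_left _ _))
    (PiNat.cylinder_anti _ (le_max_left _ _))).trans hn

theorem exists_prefix_forall_cyl_prod_subset {W : Set ((ℕ → α) × (ℕ → α))} (hWo : IsOpen W)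
    (hWd : Dense W) {P : Set (List α × List α)} (hP : P.Finite) (u : List α → List α) :
    ∃ v : List α → List α, (∀ s, u s <+: v s) ∧
      ∀ p ∈ P, p.1 ≠ p.2 → cyl (v p.1) ×ˢ cyl (v p.2) ⊆ W := by
  classical
  induction P, hP using Set.Finite.induction_on with
  | empty => exact ⟨u, fun s => List.prefix_refl _, by simp⟩
  | @insert p P _ _ ih =>
    obtain ⟨v, huv, hvP⟩ := ih
    by_cases hp : p.1 = p.2
    · refine ⟨v, huv, fun q hq hq' => ?_⟩
      rcases hq with rfl | hq
      exacts [absurd hp hq', hvP q hq hq']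
    obtain ⟨a, b, ha, hb, hab⟩ := exists_prefix_cyl_prod_subset hWo hWd (v p.1) (v p.2)
    set v' := update (update v p.1 a) p.2 b
    have hv'₁ : v' p.1 = a := by simp [v', update_of_ne hp]
    have hv'₂ : v' p.2 = b := by simp [v']
    have hvv' : ∀ s, v s <+: v' s := by
      intro s
      by_cases h₂ : s = p.2
      · subst h₂; rw [hv'₂]; exact hb
      by_cases h₁ : s = p.1
      · subst h₁; rw [hv'₁]; exact ha
      simp [v', update_of_ne h₁, update_of_ne h₂]
    refine ⟨v', fun s => (huv s).trans (hvv' s), fun q hq hq' => ?_⟩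
    rcases hq with rfl | hq
    · rwa [hv'₁, hv'₂]
    · exact (Set.prod_mono (cyl_anti (hvv' _)) (cyl_anti (hvv' _))).trans (hvP q hq hq')

theorem exists_next_level [Finite α] {W : Set ((ℕ → α) × (ℕ → α))} (hWo : IsOpen W) (hWd : Dense W)
    (n : ℕ) (τ : List α → List α) :
    ∃ τ' : List α → List α, (∀ s b, τ s ++ [b] <+: τ' (s ++ [b])) ∧
      ∀ s t, s.length = n + 1 → t.length = n + 1 → s ≠ t → cyl (τ' s) ×ˢ cyl (τ' t) ⊆ W := by
  obtain ⟨τ', hττ', hτ'W⟩ := exists_prefix_forall_cyl_prod_subset hWo hWd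
    ((List.finite_length_eq α (n + 1)).prod (List.finite_length_eq α (n + 1)))
    fun s => τ s.dropLast ++ [s.getLastD default]
  refine ⟨τ', fun s b => ?_, fun s t hs ht hst => hτ'W (s, t) ⟨hs, ht⟩ hst⟩
  simpa using hττ' (s ++ [b])

theorem exists_isSplittingTree_cyl_prod_subset [Finite α] {W : ℕ → Set ((ℕ → α) × (ℕ → α))}
    (hWo : ∀ n, IsOpen (W n)) (hWd : ∀ n, Dense (W n)) :
    ∃ σ : List α → List α, IsSplittingTree σ ∧
      ∀ n s t, s.length = n + 1 → t.length = n + 1 → s ≠ t → cyl (σ s) ×ˢ cyl (σ t) ⊆ W n := by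
  choose F hF hFW using fun n => exists_next_level (hWo n) (hWd n) n
  let T : ℕ → List α → List α := fun n => Nat.rec (fun _ => []) (fun n τ => F n τ) n
  refine ⟨fun s => T s.length s, fun s b => by simpa using hF s.length (T s.length) s b,
    fun n s t hs ht hst => ?_⟩
  simp only [hs, ht]
  exact hFW n (T n) s t hs ht hst

end CantorTree

open CantorTree in
theorem exists_continuous_injective_forall_ne_notMem_of_isMeagre {α : Type*} [TopologicalSpace α]
    [DiscreteTopology α] [Finite α] [Inhabited α] {R : Set ((ℕ → α) × (ℕ → α))}
    (hR : IsMeagre R) :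
    ∃ f : (ℕ → α) → (ℕ → α), Continuous f ∧ Injective f ∧ ∀ a b, a ≠ b → (f a, f b) ∉ R := by
  obtain ⟨_, htR, ht, htd⟩ := mem_residual.1 hR
  obtain ⟨U, hUo, rfl⟩ := isGδ_iff_eq_iInter_nat.1 ht
  have hUd : ∀ k, Dense (U k) := fun k => htd.mono (iInter_subset U k)
  obtain ⟨σ, hσ, hσW⟩ := exists_isSplittingTree_cyl_prod_subset (W := fun n => ⋂ k ∈ Iic n, U k)
    (fun n => (finite_Iic n).isOpen_biInter fun k _ => hUo k)
    (fun n => dense_biInter_of_isOpen (fun k _ => hUo k) (to_countable _) fun k _ => hUd k)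
  refine ⟨treeMap σ, continuous_treeMap σ, hσ.injective_treeMap,
    fun a b hab hR' => htR (mem_iInter.2 fun k => ?_) hR'⟩
  obtain ⟨i, hi⟩ := Function.ne_iff.1 hab
  have hres : res a (max i k + 1) ≠ res b (max i k + 1) := fun h =>
    hi (res_eq_res_iff.1 h i (by omega))
  exact mem_iInter₂.1 (hσW _ _ _ (by simp) (by simp) hres
    ⟨hσ.treeMap_mem_cyl a _, hσ.treeMap_mem_cyl b _⟩) k (le_max_right i k)

theorem mk_classes_eq_of_forall_ne_not_rel {X : Type*} {E : X → X → Prop} (hE : ∀ x, E x x)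
    {f : X → X} (hf : ∀ a b, a ≠ b → ¬E (f a) (f b)) :
    Cardinal.mk {s : Set X | ∃ η, s = {ν | E η ν}} = Cardinal.mk X := by
  refine le_antisymm (Cardinal.mk_le_of_surjective (f := fun η => ⟨{ν | E η ν}, η, rfl⟩) ?_)
    (Cardinal.mk_le_of_injective (f := fun a => ⟨{ν | E (f a) ν}, f a, rfl⟩) ?_)
  · rintro ⟨_, η, rfl⟩
    exact ⟨η, rfl⟩
  · intro a b hab
    by_contra hne
    have hab' : {ν | E (f a) ν} = {ν | E (f b) ν} := congrArg Subtype.val hab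
    exact hf a b hne (hab'.symm ▸ hE (f b) : f b ∈ {ν | E (f a) ν})

theorem stmt13 (E : (ℕ → Bool) → (ℕ → Bool) → Prop) (hE : Equivalence E)
    (hBorel : MeasurableSet {p : (ℕ → Bool) × (ℕ → Bool) | E p.1 p.2})
    (hone : ∀ η ν : ℕ → Bool, (∃! n : ℕ, η n ≠ ν n) → ¬ E η ν) :
    (∃ C : Set (ℕ → Bool), Perfect C ∧ C.Nonempty ∧
      ∀ x ∈ C, ∀ y ∈ C, x ≠ y → ¬ E x y) ∧
    Cardinal.mk {s : Set (ℕ → Bool) | ∃ η, s = {ν | E η ν}} = 2 ^ Cardinal.aleph0 := by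
  have hflip : ∀ x n, ¬E x (update x n (!x n)) := fun x n => hone x _
    ⟨n, by simp, fun k hk => by_contra fun h => hk (by simp [update_of_ne h])⟩
  have hclass : ∀ η, IsMeagre {ν | E η ν} := fun η =>
    (measurable_prodMk_left hBorel).baireMeasurableSet.isMeagre_of_forall_update_notMem
      fun x hx n hx' => hflip x n (hE.trans (hE.symm hx) hx')
  obtain ⟨f, hfc, hfi, hfE⟩ := exists_continuous_injective_forall_ne_notMem_of_isMeagre
    (hBorel.baireMeasurableSet.isMeagre_of_eventually_isMeagre_preimage_prodMk
      (Eventually.of_forall hclass))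
  have hfree : ∀ x ∈ range f, ∀ y ∈ range f, x ≠ y → ¬E x y := by
    rintro _ ⟨a, rfl⟩ _ ⟨b, rfl⟩ hab
    exact hfE a b (ne_of_apply_ne f hab)
  refine ⟨⟨range f, ⟨(isCompact_range hfc).isClosed,
    preperfect_range_of_continuous_of_injective hfc hfi⟩, range_nonempty f, hfree⟩, ?_⟩
  rw [mk_classes_eq_of_forall_ne_not_rel hE.refl hfE]
  simp
end

section
/- For every set I there is a function c : (I → {0,1}) → ℤ/2ℤ such that whenever η, ν : I → {0,1} differ in exactly one coordinate, c(η) ≠ c(ν). -/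
/-!
Choose a representative `r x` of the class of each `x : I → G` modulo finitely supported
differences and let `c x := ∑ᶠ i, (x i - r x i)`, a finite sum. Functions in the same class share
their representative, so `c x - c y = ∑ᶠ i, (x i - y i)`. For `G = ZMod 2` and Boolean functions
differing in exactly one coordinate, that sum is `1`.
-/

open Filter Function

section CofiniteSum

variable {I G : Type*}

noncomputable def cofiniteRep (x : I → G) : I → G :=
  Quotient.out (Quotient.mk (cofinite.germSetoid G) x)

theorem cofiniteRep_eventuallyEq (x : I → G) : cofiniteRep x =ᶠ[cofinite] x :=
  Quotient.mk_out (s := cofinite.germSetoid G) x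

theorem cofiniteRep_congr {x y : I → G} (h : x =ᶠ[cofinite] y) : cofiniteRep x = cofiniteRep y :=
  congrArg Quotient.out (Quotient.sound h)

variable [AddCommGroup G]

theorem hasFiniteSupport_sub_of_eventuallyEq {x y : I → G} (h : x =ᶠ[cofinite] y) :
    HasFiniteSupport (x - y) := by
  simpa [HasFiniteSupport, support, sub_eq_zero] using eventually_cofinite.1 h

noncomputable def cofiniteSum (x : I → G) : G :=
  ∑ᶠ i, (x - cofiniteRep x) i

theorem cofiniteSum_sub_cofiniteSum {x y : I → G} (h : x =ᶠ[cofinite] y) :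
    cofiniteSum x - cofiniteSum y = ∑ᶠ i, (x i - y i) := by
  have hx := hasFiniteSupport_sub_of_eventuallyEq (cofiniteRep_eventuallyEq x).symm
  have hy := hasFiniteSupport_sub_of_eventuallyEq (cofiniteRep_eventuallyEq y).symm
  rw [cofiniteSum, cofiniteSum, ← finsum_sub_distrib hx hy, cofiniteRep_congr h]
  simp only [Pi.sub_apply, sub_sub_sub_cancel_right]

end CofiniteSum

theorem Bool.toNat_cast_sub_zmod_two_of_ne {a b : Bool} (h : a ≠ b) :
    (a.toNat : ZMod 2) - b.toNat = 1 := by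
  revert h; cases a <;> cases b <;> decide

theorem stmt15 (I : Type*) :
    ∃ c : (I → Bool) → ZMod 2,
      ∀ η ν : I → Bool, (∃! i : I, η i ≠ ν i) → c η ≠ c ν := by
  let toZMod : Bool → ZMod 2 := fun b => b.toNat
  refine ⟨fun η => cofiniteSum (toZMod ∘ η), ?_⟩
  rintro η ν ⟨i₀, hi₀, huniq⟩
  have heq_off : ∀ i, i ≠ i₀ → η i = ν i := fun i hi => not_not.1 (mt (huniq i) hi)
  have heq : η =ᶠ[cofinite] ν :=
    eventually_cofinite.2 <| (Set.finite_singleton i₀).subset fun i hi => huniq i hi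
  refine sub_ne_zero.1 ?_
  calc cofiniteSum (toZMod ∘ η) - cofiniteSum (toZMod ∘ ν)
      = ∑ᶠ i, (toZMod (η i) - toZMod (ν i)) := cofiniteSum_sub_cofiniteSum (heq.fun_comp toZMod)
    _ = toZMod (η i₀) - toZMod (ν i₀) :=
      finsum_eq_single _ i₀ fun i hi => sub_eq_zero.2 (congrArg toZMod (heq_off i hi))
    _ = 1 := Bool.toNat_cast_sub_zmod_two_of_ne hi₀
    _ ≠ 0 := one_ne_zero
end
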